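/- arXiv:1801.06893 — 8 statements merged into one kernel-verified Lean document; each statement's English description precedes it below -/
import Mathlib

section
/- For every m ≥ 1, the set { C·Cᵀ : C ∈ SU_m } equals the set { B ∈ SU_m : B = Bᵀ } of symmetric special unitary matrices. -/
set_option maxHeartbeats 1000000

open Matrix Complex

noncomputable section

lemma sim_diag {m : ℕ} (X Y : Matrix (Fin m) (Fin m) ℝ) (hX : X.IsHermitian)
    (hY : Y.IsHermitian) (hcomm : X * Y = Y * X) :
    ∃ (Q : Matrix (Fin m) (Fin m) ℝ) (x y : Fin m → ℝ),
      Q * Qᵀ = 1 ∧ X = Qᵀ * diagonal x * Q ∧ Y = Qᵀ * diagonal y * Q := by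
  classical
  set A : EuclideanSpace ℝ (Fin m) →ₗ[ℝ] EuclideanSpace ℝ (Fin m) := Matrix.toEuclideanLin X with hA
  set B : EuclideanSpace ℝ (Fin m) →ₗ[ℝ] EuclideanSpace ℝ (Fin m) := Matrix.toEuclideanLin Y with hB
  have hAs : A.IsSymmetric := (Matrix.isHermitian_iff_isSymmetric).mp hX
  have hBs : B.IsSymmetric := (Matrix.isHermitian_iff_isSymmetric).mp hY
  have key : ∀ (P R : Matrix (Fin m) (Fin m) ℝ) (v : EuclideanSpace ℝ (Fin m)),
      (Matrix.toEuclideanLin P) ((Matrix.toEuclideanLin R) v)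
        = (WithLp.equiv 2 (Fin m → ℝ)).symm ((P * R) *ᵥ (WithLp.equiv 2 (Fin m → ℝ) v)) := by
    intro P R v
    simp [Matrix.toEuclideanLin_apply, Matrix.mulVec_mulVec]
  have hABc : Commute A B := by
    apply LinearMap.ext
    intro v
    show A (B v) = B (A v)
    rw [hA, hB, key, key, hcomm]
  set V : ℝ × ℝ → Submodule ℝ (EuclideanSpace ℝ (Fin m)) :=
    fun p => Module.End.eigenspace A p.2 ⊓ Module.End.eigenspace B p.1 with hV
  have hInt : DirectSum.IsInternal V :=
    LinearMap.IsSymmetric.directSum_isInternal_of_commute hAs hBs hABc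
  have hOF : OrthogonalFamily ℝ (fun p => V p) (fun p => (V p).subtypeₗᵢ) :=
    LinearMap.IsSymmetric.orthogonalFamily_eigenspace_inf_eigenspace hAs hBs
  have ind := hInt.submodule_iSupIndep
  haveI : Fintype {p : ℝ × ℝ // V p ≠ ⊥} := ind.fintypeNeBotOfFiniteDimensional
  set V' : {p : ℝ × ℝ // V p ≠ ⊥} → Submodule ℝ (EuclideanSpace ℝ (Fin m)) :=
    fun p => V p.1 with hV'
  have hsup : (⨆ p : {p : ℝ × ℝ // V p ≠ ⊥}, V p.1) = ⨆ p, V p := by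
    refine le_antisymm (iSup_le fun p => le_iSup V p.1) (iSup_le fun p => ?_)
    rcases eq_or_ne (V p) ⊥ with h | h
    · rw [h]; exact bot_le
    · exact le_iSup_of_le (⟨p, h⟩ : {p : ℝ × ℝ // V p ≠ ⊥}) le_rfl
  have hInt' : DirectSum.IsInternal V' :=
    DirectSum.isInternal_submodule_of_iSupIndep_of_iSup_eq_top
      (ind.comp Subtype.val_injective) (hsup.trans hInt.submodule_iSup_eq_top)
  have hOF' : OrthogonalFamily ℝ (fun p => V' p) (fun p => (V' p).subtypeₗᵢ) :=
    hOF.comp Subtype.val_injective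
  have hn : Module.finrank ℝ (EuclideanSpace ℝ (Fin m)) = m := finrank_euclideanSpace_fin
  set b := hInt'.subordinateOrthonormalBasis hn hOF' with hb
  set idx := fun j => hInt'.subordinateOrthonormalBasisIndex hn j hOF' with hidx
  have hmem : ∀ j, b j ∈ V' (idx j) :=
    fun j => hInt'.subordinateOrthonormalBasis_subordinate hn j hOF'
  set x : Fin m → ℝ := fun j => ((idx j : ℝ × ℝ)).2 with hx
  set y : Fin m → ℝ := fun j => ((idx j : ℝ × ℝ)).1 with hy
  have hXev : ∀ j, X *ᵥ (WithLp.equiv 2 _ (b j)) = x j • (WithLp.equiv 2 _ (b j)) := by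
    intro j
    have h0 := hmem j
    rw [Submodule.mem_inf] at h0
    have := Module.End.mem_eigenspace_iff.mp h0.1
    have := congrArg (WithLp.equiv 2 (Fin m → ℝ)) this
    simpa [hA, hx] using this
  have hYev : ∀ j, Y *ᵥ (WithLp.equiv 2 _ (b j)) = y j • (WithLp.equiv 2 _ (b j)) := by
    intro j
    have h0 := hmem j
    rw [Submodule.mem_inf] at h0
    have := Module.End.mem_eigenspace_iff.mp h0.2
    have := congrArg (WithLp.equiv 2 (Fin m → ℝ)) this
    simpa [hB, hy] using this
  set Q : Matrix (Fin m) (Fin m) ℝ := fun j i => WithLp.equiv 2 (Fin m → ℝ) (b j) i with hQ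
  have hQQt : Q * Qᵀ = 1 := by
    ext j k
    have horth := b.orthonormal
    rw [orthonormal_iff_ite] at horth
    have := horth j k
    simp only [PiLp.inner_apply, RCLike.inner_apply, starRingEnd_apply, star_trivial] at this
    simp only [Matrix.mul_apply, Matrix.transpose_apply]
    simp only [Matrix.mul_apply, Matrix.transpose_apply, hQ, Matrix.one_apply]
    convert this using 1
    exact Finset.sum_congr rfl fun _ _ => mul_comm _ _
  have hQtQ : Qᵀ * Q = 1 := mul_eq_one_comm.mp hQQt
  have hXQt : X * Qᵀ = Qᵀ * diagonal x := by
    ext i j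
    have := congrFun (hXev j) i
    simp only [Matrix.mulVec, dotProduct] at this
    rw [Matrix.mul_diagonal]
    simp only [Matrix.mul_apply, Matrix.transpose_apply]
    simp only [Matrix.mul_apply, Matrix.transpose_apply, hQ]
    rw [this]
    simp [mul_comm]
  have hYQt : Y * Qᵀ = Qᵀ * diagonal y := by
    ext i j
    have := congrFun (hYev j) i
    simp only [Matrix.mulVec, dotProduct] at this
    rw [Matrix.mul_diagonal]
    simp only [Matrix.mul_apply, Matrix.transpose_apply]
    simp only [Matrix.mul_apply, Matrix.transpose_apply, hQ]
    rw [this]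
    simp [mul_comm]
  refine ⟨Q, x, y, hQQt, ?_, ?_⟩
  · calc X = X * (Qᵀ * Q) := by rw [hQtQ, mul_one]
    _ = (X * Qᵀ) * Q := by rw [mul_assoc]
    _ = Qᵀ * diagonal x * Q := by rw [hXQt]
  · calc Y = Y * (Qᵀ * Q) := by rw [hQtQ, mul_one]
    _ = (Y * Qᵀ) * Q := by rw [mul_assoc]
    _ = Qᵀ * diagonal y * Q := by rw [hYQt]

end

section helpers

variable {n : Type*} [Fintype n] [DecidableEq n] {R : Type*} [CommRing R]

lemma conj_mul_helper {Q : Matrix n n R} (h : Q * Qᵀ = 1) (D E : Matrix n n R) :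
    (Qᵀ * D * Q) * (Qᵀ * E * Q) = Qᵀ * (D * E) * Q := by
  simp only [Matrix.mul_assoc]
  rw [show Q * (Qᵀ * (E * Q)) = (Q * Qᵀ) * (E * Q) by simp only [Matrix.mul_assoc], h, one_mul]

lemma conj_cancel_helper {Q : Matrix n n R} (h : Q * Qᵀ = 1) (M : Matrix n n R) :
    Q * (Qᵀ * M * Q) * Qᵀ = M := by
  have h2 : Qᵀ * Q = 1 := mul_eq_one_comm.mp h
  simp only [Matrix.mul_assoc]
  rw [show Q * (Qᵀ * (M * (Q * Qᵀ))) = (Q * Qᵀ) * (M * (Q * Qᵀ)) by simp only [Matrix.mul_assoc],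
    h, one_mul, mul_one]

lemma split_helper {P Q R S : Matrix n n ℝ}
    (h : P.map (Complex.ofRealHom : ℝ →+* ℂ) + Complex.I • Q.map Complex.ofRealHom
       = R.map Complex.ofRealHom + Complex.I • S.map Complex.ofRealHom) : P = R ∧ Q = S := by
  have h' : ∀ i j, (P i j : ℂ) + Complex.I * (Q i j : ℂ)
      = (R i j : ℂ) + Complex.I * (S i j : ℂ) := by
    intro i j
    have := congrFun (congrFun h i) j
    simpa [Matrix.add_apply, Matrix.smul_apply, Matrix.map_apply] using this
  have key : ∀ i j, P i j = R i j ∧ Q i j = S i j := fun i j => by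
    simpa [Complex.ext_iff] using h' i j
  exact ⟨by ext i j; exact (key i j).1, by ext i j; exact (key i j).2⟩

end helpers

lemma takagi {m : ℕ} (hm : 1 ≤ m) (B : Matrix (Fin m) (Fin m) ℂ)
    (hB : B ∈ Matrix.unitaryGroup (Fin m) ℂ) (hdet : B.det = 1) (hsym : B = Bᵀ) :
    ∃ C : Matrix (Fin m) (Fin m) ℂ,
      C ∈ Matrix.unitaryGroup (Fin m) ℂ ∧ C.det = 1 ∧ B = C * Cᵀ := by
  classical
  set f : ℝ →+* ℂ := Complex.ofRealHom with hf
  set X : Matrix (Fin m) (Fin m) ℝ := fun i j => (B i j).re with hX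
  set Y : Matrix (Fin m) (Fin m) ℝ := fun i j => (B i j).im with hY
  have hsym' : ∀ i j, B j i = B i j := fun i j => by
    conv_lhs => rw [hsym]
    rfl
  have hBdec : B = X.map f + Complex.I • Y.map f := by
    ext i j
    simp only [Matrix.add_apply, Matrix.smul_apply, Matrix.map_apply, hX, hY, hf,
      Complex.ofRealHom_eq_coe, smul_eq_mul]
    rw [mul_comm]
    exact (Complex.re_add_im _).symm
  have hstar : star B = X.map f - Complex.I • Y.map f := by
    ext i j
    simp only [Matrix.sub_apply, Matrix.smul_apply, Matrix.map_apply]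
    simp only [Matrix.sub_apply, Matrix.smul_apply, Matrix.map_apply, hX, hY, hf,
      Complex.ofRealHom_eq_coe, smul_eq_mul, Matrix.star_apply, hsym' i j]
    rw [Complex.ext_iff]
    simp [mul_comm]
  have hBstarB : B * star B = 1 := (Matrix.mem_unitaryGroup_iff).mp hB
  have hexp : (X * X + Y * Y).map f + Complex.I • ((Y * X - X * Y).map f) = 1 := by
    rw [← hBstarB, hstar, hBdec]
    rw [Matrix.map_add _ (map_add f), Matrix.map_sub _ (map_sub f),
      Matrix.map_mul, Matrix.map_mul, Matrix.map_mul, Matrix.map_mul]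
    rw [mul_sub, add_mul, add_mul, Matrix.smul_mul, Matrix.mul_smul, Matrix.smul_mul,
      Matrix.mul_smul, smul_smul, Complex.I_mul_I, neg_one_smul, smul_sub]
    abel
  have hone : ((1 : Matrix (Fin m) (Fin m) ℝ)).map f + Complex.I • ((0 : Matrix (Fin m) (Fin m) ℝ)).map f
      = 1 := by
    simp
  have hsplit := split_helper (hexp.trans hone.symm)
  have hXXYY : X * X + Y * Y = 1 := hsplit.1
  have hcomm : X * Y = Y * X := by
    have := hsplit.2
    rw [sub_eq_zero] at this
    exact this.symm
  have hXh : X.IsHermitian := by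
    ext i j
    rw [Matrix.conjTranspose_apply]
    simp only [Matrix.conjTranspose_apply, star_trivial, hX]
    rw [hsym' j i]
  have hYh : Y.IsHermitian := by
    ext i j
    rw [Matrix.conjTranspose_apply]
    simp only [Matrix.conjTranspose_apply, star_trivial, hY]
    rw [hsym' j i]
  obtain ⟨Q, x, y, hQQt, hXQ, hYQ⟩ := sim_diag X Y hXh hYh hcomm
  have hQtQ : Qᵀ * Q = 1 := mul_eq_one_comm.mp hQQt
  -- abs of diagonal entries
  have hdiag1 : diagonal x * diagonal x + diagonal y * diagonal y = 1 := by
    have h1 : X * X + Y * Y =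
        Qᵀ * (diagonal x * diagonal x + diagonal y * diagonal y) * Q := by
      rw [hXQ, hYQ, conj_mul_helper hQQt, conj_mul_helper hQQt, Matrix.mul_add, Matrix.add_mul]
    have h2 := h1.symm.trans hXXYY
    have h3 := congrArg (fun M => Q * M * Qᵀ) h2
    simpa [conj_cancel_helper hQQt, hQQt] using h3
  have habs : ∀ j, x j * x j + y j * y j = 1 := by
    intro j
    have := congrFun (congrFun hdiag1 j) j
    simpa [Matrix.diagonal_mul_diagonal, Matrix.add_apply, Matrix.diagonal_apply_eq,
      Matrix.one_apply_eq] using this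
  -- complexified
  set Qc : Matrix (Fin m) (Fin m) ℂ := Q.map f with hQc
  have hQcQct : Qc * Qcᵀ = 1 := by
    rw [hQc, ← Matrix.transpose_map, ← Matrix.map_mul, hQQt]
    simp
  have hQctQc : Qcᵀ * Qc = 1 := mul_eq_one_comm.mp hQcQct
  set d : Fin m → ℂ := fun j => (x j : ℂ) + (y j : ℂ) * Complex.I with hd
  have hdiagd : diagonal d = (diagonal x).map f + Complex.I • (diagonal y).map f := by
    ext i j
    rcases eq_or_ne i j with rfl | hij
    · simp [hd, hf, mul_comm]
    · simp [Matrix.diagonal_apply_ne _ hij]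
  have hBQ : B = Qcᵀ * diagonal d * Qc := by
    rw [hBdec, hXQ, hYQ, hdiagd]
    simp only [Matrix.map_mul, Matrix.transpose_map, Matrix.mul_add, Matrix.add_mul,
      Matrix.mul_smul, Matrix.smul_mul]
    rfl
  -- square roots of the diagonal entries
  have hsq : ∀ j, ∃ z : ℂ, z ^ 2 = d j := fun j =>
    IsAlgClosed.exists_pow_nat_eq (d j) two_pos
  choose sqr hsqr using hsq
  have hnormd : ∀ j, Complex.normSq (d j) = 1 := by
    intro j
    have := habs j
    simp only [hd, Complex.normSq_apply, Complex.add_re, Complex.ofReal_re, Complex.mul_re,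
      Complex.I_re, Complex.I_im, Complex.ofReal_im, Complex.add_im, Complex.mul_im]
    ring_nf
    ring_nf at this
    linarith
  have hconjsqr : ∀ j, (starRingEnd ℂ) (sqr j) * sqr j = 1 := by
    intro j
    have h2 : Complex.normSq (sqr j) ^ 2 = 1 := by
      rw [← map_pow, hsqr j, hnormd j]
    have h3 : (Complex.normSq (sqr j) - 1) * (Complex.normSq (sqr j) + 1) = 0 := by
      linear_combination h2
    have h4 : Complex.normSq (sqr j) = 1 := by
      rcases mul_eq_zero.mp h3 with h | h
      · linarith [sub_eq_zero.mp h]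
      · have := Complex.normSq_nonneg (sqr j)
        linarith
    rw [mul_comm, Complex.mul_conj, h4]
    simp
  have hq : Qcᵀ.det * Qc.det = 1 := by
    rw [← Matrix.det_mul, hQctQc, Matrix.det_one]
  have hdetd : (∏ j, d j) = 1 := by
    have hd1 := hdet
    rw [hBQ, Matrix.det_mul, Matrix.det_mul, Matrix.det_diagonal] at hd1
    linear_combination hd1 - (∏ j, d j) * hq
  set P : ℂ := ∏ j, sqr j with hP
  have hP2 : P ^ 2 = 1 := by
    rw [hP, ← Finset.prod_pow]
    rw [Finset.prod_congr rfl (fun j _ => hsqr j)]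
    exact hdetd
  set z0 : Fin m := ⟨0, hm⟩ with hz0
  set ν : Fin m → ℂ := if P = 1 then sqr else Function.update sqr z0 (-sqr z0) with hν
  have hν2 : ∀ j, ν j ^ 2 = d j := by
    intro j
    rw [hν]
    split_ifs
    · exact hsqr j
    · rcases eq_or_ne j z0 with h | hj
      · rw [h, Function.update_self, neg_sq]; exact hsqr z0
      · rw [Function.update_of_ne hj]; exact hsqr j
  have hνconj : ∀ j, (starRingEnd ℂ) (ν j) * ν j = 1 := by
    intro j
    rw [hν]
    split_ifs
    · exact hconjsqr j
    · rcases eq_or_ne j z0 with h | hj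
      · rw [h, Function.update_self, map_neg, neg_mul_neg]; exact hconjsqr z0
      · rw [Function.update_of_ne hj]; exact hconjsqr j
  have hνprod : (∏ j, ν j) = 1 := by
    rw [hν]
    split_ifs with h
    · exact h
    · have hPm : P = -1 := by
        have h3 : (P - 1) * (P + 1) = 0 := by linear_combination hP2
        rcases mul_eq_zero.mp h3 with h' | h'
        · exact absurd (sub_eq_zero.mp h') h
        · exact eq_neg_of_add_eq_zero_left h'
      have e1 : (∏ j, Function.update sqr z0 (-sqr z0) j)
          = (-sqr z0) * ∏ j ∈ Finset.univ.erase z0, sqr j := by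
        rw [← Finset.mul_prod_erase Finset.univ _ (Finset.mem_univ z0), Function.update_self]
        congr 1
        exact Finset.prod_congr rfl fun j hj =>
          Function.update_of_ne (Finset.ne_of_mem_erase hj) _ _
      have e2 : sqr z0 * ∏ j ∈ Finset.univ.erase z0, sqr j = P :=
        (Finset.mul_prod_erase Finset.univ sqr (Finset.mem_univ z0)).trans hP.symm
      rw [e1, neg_mul, e2, hPm, neg_neg]
  set C : Matrix (Fin m) (Fin m) ℂ := Qcᵀ * diagonal ν * Qc with hC
  have hCt : Cᵀ = C := by
    rw [hC, Matrix.transpose_mul, Matrix.transpose_mul, Matrix.transpose_transpose,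
      Matrix.diagonal_transpose, Matrix.mul_assoc]
  have hstarC : star C = Qcᵀ * diagonal (fun j => (starRingEnd ℂ) (ν j)) * Qc := by
    have h1 : star C = C.map (starRingEnd ℂ) := by
      ext i j
      simp only [Matrix.star_apply, Matrix.map_apply]
      exact congrArg star (congrFun (congrFun hCt i) j)
    rw [h1, hC, Matrix.map_mul, Matrix.map_mul]
    congr 1
    · congr 1
      · rw [← Matrix.transpose_map]
        refine congrArg Matrix.transpose ?_
        ext i j
        simp [hQc, hf, Complex.conj_ofReal]
      · exact Matrix.diagonal_map (map_zero _)
    · ext i j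
      simp [hQc, hf, Complex.conj_ofReal]
  refine ⟨C, ?_, ?_, ?_⟩
  · rw [Matrix.mem_unitaryGroup_iff']
    rw [hstarC, hC, conj_mul_helper hQcQct, Matrix.diagonal_mul_diagonal]
    have : (fun j => (starRingEnd ℂ) (ν j) * ν j) = fun _ => (1 : ℂ) := funext hνconj
    rw [this, Matrix.diagonal_one, Matrix.mul_one, hQctQc]
  · rw [hC, Matrix.det_mul, Matrix.det_mul, Matrix.det_diagonal]
    linear_combination (∏ j, ν j) * hq + hνprod
  · rw [hCt, hC, conj_mul_helper hQcQct, Matrix.diagonal_mul_diagonal, hBQ]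
    have hdd : (fun i => ν i * ν i) = d := funext fun i => by rw [← hν2 i]; ring
    rw [hdd]

theorem stmt3 {m : ℕ} (hm : 1 ≤ m) :
    { B : Matrix (Fin m) (Fin m) ℂ |
        ∃ C : Matrix (Fin m) (Fin m) ℂ,
          C ∈ Matrix.unitaryGroup (Fin m) ℂ ∧ C.det = 1 ∧ B = C * Cᵀ } =
    { B : Matrix (Fin m) (Fin m) ℂ |
        B ∈ Matrix.unitaryGroup (Fin m) ℂ ∧ B.det = 1 ∧ B = Bᵀ } := by
  ext B
  simp only [Set.mem_setOf_eq]
  constructor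
  · rintro ⟨C, hC, hdetC, rfl⟩
    have htrans : Cᵀ ∈ Matrix.unitaryGroup (Fin m) ℂ := by
      rw [Matrix.mem_unitaryGroup_iff']
      have h1 : C * star C = 1 := (Matrix.mem_unitaryGroup_iff).mp hC
      have h2 : star Cᵀ = C.map (starRingEnd ℂ) := by
        ext i j; simp [Matrix.star_apply]
      have h3 : Cᵀ = (star C).map (starRingEnd ℂ) := by
        ext i j; simp [Matrix.star_apply]
      rw [h2]
      conv_lhs => rw [h3]
      rw [← Matrix.map_mul, h1]
      simp
    refine ⟨mul_mem hC htrans, ?_, ?_⟩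
    · rw [Matrix.det_mul, Matrix.det_transpose, hdetC, mul_one]
    · rw [Matrix.transpose_mul, Matrix.transpose_transpose]
  · rintro ⟨hB, hdet, hsym⟩
    exact takagi hm B hB hdet hsym
end

section
/- Let x, x' be unit vectors in ℂⁿ with x ∈_min ℂ^m and x' ∈_min ℂ^{m'}, and let θ, θ' ∈ ℝ. If m > m', then A_{(θ,x)}·A_{(θ',x')} = A_{(θ',x')}·A_{(θ,x̃)}, where x̃ = A_{(θ',x')}⁻¹·x; moreover x̃ is a unit vector with x̃ ∈_min ℂ^m. -/
open Matrix Complex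

/-- The pseudo-rotation `A_{(θ,x)} = Iₙ − (1 − e^{iθ})·x·x̄ᵀ`. -/
noncomputable def pseudoRot {n : ℕ} (θ : ℝ) (x : Fin n → ℂ) : Matrix (Fin n) (Fin n) ℂ :=
  1 - (1 - Complex.exp (θ * Complex.I)) • Matrix.vecMulVec x (star x)

/-- `x` minimally belongs to `ℂ^k` (1-based coordinates `k+1,…,n` vanish and the
`k`-th coordinate is nonzero). -/
def minBelongs {n : ℕ} (x : Fin n → ℂ) (k : ℕ) : Prop :=
  (∀ i : Fin n, k ≤ (i : ℕ) → x i = 0) ∧ ∃ i : Fin n, (i : ℕ) + 1 = k ∧ x i ≠ 0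

lemma my_mul_vecMulVec {n : ℕ} (M : Matrix (Fin n) (Fin n) ℂ) (a b : Fin n → ℂ) :
    M * vecMulVec a b = vecMulVec (M *ᵥ a) b := by
  ext i j
  simp [mul_apply, vecMulVec_apply, mulVec, dotProduct, Finset.sum_mul, mul_assoc]

lemma my_vecMulVec_mul {n : ℕ} (M : Matrix (Fin n) (Fin n) ℂ) (a b : Fin n → ℂ) :
    vecMulVec a b * M = vecMulVec a (b ᵥ* M) := by
  ext i j
  simp [mul_apply, vecMulVec_apply, vecMul, dotProduct, Finset.mul_sum, mul_assoc]

lemma my_vecMulVec_mulVec {n : ℕ} (a b v : Fin n → ℂ) :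
    vecMulVec a b *ᵥ v = (b ⬝ᵥ v) • a := by
  ext i
  simp [vecMulVec_apply, mulVec, dotProduct, Finset.sum_mul, Finset.mul_sum, mul_assoc,
    mul_comm, mul_left_comm]

lemma my_vecMulVec_sq {n : ℕ} (x : Fin n → ℂ) (hx : star x ⬝ᵥ x = 1) :
    vecMulVec x (star x) * vecMulVec x (star x) = vecMulVec x (star x) := by
  rw [my_mul_vecMulVec, my_vecMulVec_mulVec, hx, one_smul]

lemma pseudoRot_mul_self {n : ℕ} (θ φ : ℝ) (x : Fin n → ℂ) (hx : star x ⬝ᵥ x = 1) :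
    pseudoRot θ x * pseudoRot φ x = pseudoRot (θ + φ) x := by
  unfold pseudoRot
  simp only [mul_sub, sub_mul, one_mul, mul_one, smul_mul_assoc, mul_smul_comm,
    smul_smul, my_vecMulVec_sq x hx]
  have h : Complex.exp ((↑(θ + φ)) * Complex.I)
      = Complex.exp (θ * Complex.I) * Complex.exp (φ * Complex.I) := by
    rw [← Complex.exp_add]; push_cast; ring_nf
  rw [h]
  module

lemma pseudoRot_inv {n : ℕ} (θ : ℝ) (x : Fin n → ℂ) (hx : star x ⬝ᵥ x = 1) :
    pseudoRot θ x * pseudoRot (-θ) x = 1 := by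
  rw [pseudoRot_mul_self θ (-θ) x hx]
  simp [pseudoRot]

lemma my_vecMulVec_conjTranspose {n : ℕ} (a b : Fin n → ℂ) :
    (vecMulVec a b)ᴴ = vecMulVec (star b) (star a) := by
  ext i j
  simp [conjTranspose_apply, vecMulVec_apply, mul_comm]

lemma pseudoRot_conjTranspose {n : ℕ} (θ : ℝ) (x : Fin n → ℂ) :
    (pseudoRot θ x)ᴴ = pseudoRot (-θ) x := by
  unfold pseudoRot
  rw [conjTranspose_sub, conjTranspose_smul, my_vecMulVec_conjTranspose]
  simp only [conjTranspose_one, star_star]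
  congr 1
  simp only [star_sub, star_one, RCLike.star_def]
  rw [← Complex.exp_conj]
  congr 2
  simp

lemma pseudoRot_conj {n : ℕ} (θ : ℝ) (x : Fin n → ℂ) (B C : Matrix (Fin n) (Fin n) ℂ)
    (h : star (C *ᵥ x) = star x ᵥ* B) :
    pseudoRot θ (C *ᵥ x)
      = 1 - (1 - Complex.exp (θ * Complex.I)) • (C * vecMulVec x (star x) * B) := by
  unfold pseudoRot
  rw [h, ← my_vecMulVec_mul, ← my_mul_vecMulVec]

lemma conj_comm_aux {n : ℕ} (B C A : Matrix (Fin n) (Fin n) ℂ) (a : ℂ) (hBC : B * C = 1) :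
    (1 - a • A) * B = B * (1 - a • (C * A * B)) := by
  rw [mul_sub, mul_one, mul_smul_comm, ← mul_assoc, ← mul_assoc, hBC, one_mul, sub_mul,
    one_mul, smul_mul_assoc]

theorem stmt5 {n : ℕ} (θ θ' : ℝ) (x x' : Fin n → ℂ) (m m' : ℕ)
    (hx : star x ⬝ᵥ x = 1) (hx' : star x' ⬝ᵥ x' = 1)
    (hmx : minBelongs x m) (hmx' : minBelongs x' m') (hmm : m' < m) :
    pseudoRot θ x * pseudoRot θ' x'
      = pseudoRot θ' x' * pseudoRot θ ((pseudoRot θ' x')⁻¹ *ᵥ x) ∧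
    star ((pseudoRot θ' x')⁻¹ *ᵥ x) ⬝ᵥ ((pseudoRot θ' x')⁻¹ *ᵥ x) = 1 ∧
    minBelongs ((pseudoRot θ' x')⁻¹ *ᵥ x) m := by
  have hBC : pseudoRot θ' x' * pseudoRot (-θ') x' = 1 := pseudoRot_inv θ' x' hx'
  have hCB : pseudoRot (-θ') x' * pseudoRot θ' x' = 1 := by
    have h := pseudoRot_inv (-θ') x' hx'
    rwa [neg_neg] at h
  have hinv : (pseudoRot θ' x')⁻¹ = pseudoRot (-θ') x' := Matrix.inv_eq_left_inv hCB
  have hCH : (pseudoRot (-θ') x')ᴴ = pseudoRot θ' x' := by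
    rw [pseudoRot_conjTranspose, neg_neg]
  rw [hinv]
  have hstarCx : star (pseudoRot (-θ') x' *ᵥ x) = star x ᵥ* pseudoRot θ' x' := by
    rw [Matrix.star_mulVec, hCH]
  refine ⟨?_, ?_, ?_, ?_⟩
  · rw [pseudoRot_conj θ x _ _ hstarCx]
    have hA : pseudoRot θ x
        = 1 - (1 - Complex.exp (θ * Complex.I)) • Matrix.vecMulVec x (star x) := rfl
    rw [hA]
    exact conj_comm_aux _ _ _ _ hBC
  · rw [hstarCx, Matrix.dotProduct_mulVec, Matrix.vecMul_vecMul, hBC, Matrix.vecMul_one, hx]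
  all_goals {
    have hCx : pseudoRot (-θ') x' *ᵥ x
        = x - ((1 - Complex.exp ((-θ' : ℝ) * Complex.I)) * (star x' ⬝ᵥ x)) • x' := by
      unfold pseudoRot
      rw [Matrix.sub_mulVec, Matrix.one_mulVec, Matrix.smul_mulVec,
        my_vecMulVec_mulVec, smul_smul]
    first
    | (intro i hi
       have h1 : x i = 0 := hmx.1 i hi
       have h2 : x' i = 0 := hmx'.1 i (by omega)
       simp [hCx, h1, h2])
    | (obtain ⟨i, hi1, hi2⟩ := hmx.2
       refine ⟨i, hi1, ?_⟩
       have h2 : x' i = 0 := hmx'.1 i (by omega)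
       simpa [hCx, h2] using hi2)
  }
end

section
/- Let x, x' be unit vectors in ℂⁿ, both with x ∈_min ℂ^m and x' ∈_min ℂ^m, spanning distinct complex lines, and let θ, θ' ∈ ℝ. Let W = span_ℂ{x, x'} (a 2-dimensional complex subspace). Then W ∩ ℂ^{m−1} is a 1-dimensional complex subspace, and there exist angles θ̃, θ̃' ∈ ℝ, a unit vector x̃ spanning W ∩ ℂ^{m−1} with x̃ ∈_min ℂ^k for some k ≤ m−1, and a unit vector x̃' ∈_min ℂ^m, such that A_{(θ,x)}·A_{(θ',x')} = A_{(θ̃,x̃)}·A_{(θ̃',x̃')}. -/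
open Matrix Complex

/-- `ℂ^k ⊆ ℂⁿ`: the subspace of vectors whose 0-based coordinates `≥ k` all vanish,
i.e. the span of the first `k` standard basis vectors. -/
noncomputable def stdSubspace (n k : ℕ) : Submodule ℂ (Fin n → ℂ) where
  carrier := { y | ∀ i : Fin n, k ≤ (i : ℕ) → y i = 0 }
  add_mem' := by
    intro a b ha hb i hi
    simp only [Pi.add_apply, ha i hi, hb i hi, add_zero]
  zero_mem' := by
    intro i hi
    rfl
  smul_mem' := by
    intro c a ha i hi
    simp only [Pi.smul_apply, ha i hi, smul_zero]

lemma conj_exp_mul_I (θ : ℝ) :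
    (starRingEnd ℂ) (Complex.exp (θ * Complex.I)) = Complex.exp (-(θ * Complex.I)) := by
  rw [← Complex.exp_conj]
  congr 1
  simp [Complex.ext_iff]

lemma exp_unit (θ : ℝ) :
    (starRingEnd ℂ) (Complex.exp (θ * Complex.I)) * Complex.exp (θ * Complex.I) = 1 := by
  rw [conj_exp_mul_I, ← Complex.exp_add]
  simp

lemma exists_angle (z : ℂ) (hz : (starRingEnd ℂ) z * z = 1) :
    ∃ φ : ℝ, Complex.exp (φ * Complex.I) = z := by
  refine ⟨z.arg, ?_⟩
  have habs : ‖z‖ = 1 := by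
    have h1 : (Complex.normSq z : ℂ) = 1 := by rw [Complex.normSq_eq_conj_mul_self, hz]
    have h2 : Complex.normSq z = 1 := by exact_mod_cast h1
    have := Complex.sq_norm z
    nlinarith [norm_nonneg z]
  have := Complex.norm_mul_exp_arg_mul_I z
  rw [habs] at this
  simpa using this

lemma dot_self_eq {N : ℕ} (y : Fin N → ℂ) :
    star y ⬝ᵥ y = ((∑ i, Complex.normSq (y i) : ℝ) : ℂ) := by
  simp [dotProduct, Complex.normSq_eq_conj_mul_self]

lemma exists_real_smul_unit {N : ℕ} (y : Fin N → ℂ) (hy : y ≠ 0) :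
    ∃ r : ℝ, 0 < r ∧ star ((r : ℂ) • y) ⬝ᵥ ((r : ℂ) • y) = 1 := by
  set S : ℝ := ∑ i, Complex.normSq (y i) with hS
  have hSpos : 0 < S := by
    obtain ⟨i, hi⟩ := Function.ne_iff.mp hy
    have h1 : 0 < Complex.normSq (y i) := Complex.normSq_pos.mpr hi
    have h2 : ∀ j ∈ Finset.univ, 0 ≤ Complex.normSq (y j) := fun j _ => Complex.normSq_nonneg _
    calc 0 < Complex.normSq (y i) := h1
    _ ≤ S := Finset.single_le_sum h2 (Finset.mem_univ i)
  refine ⟨(Real.sqrt S)⁻¹, by positivity, ?_⟩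
  have : star ((((Real.sqrt S)⁻¹ : ℝ) : ℂ) • y) ⬝ᵥ ((((Real.sqrt S)⁻¹ : ℝ) : ℂ) • y)
      = (((Real.sqrt S)⁻¹ : ℝ) : ℂ) * ((((Real.sqrt S)⁻¹ : ℝ) : ℂ) * (star y ⬝ᵥ y)) := by
    rw [star_smul, smul_dotProduct, dotProduct_smul]
    simp [Complex.conj_ofReal, smul_smul, mul_assoc]
  rw [this, dot_self_eq, ← hS]
  have hs : (Real.sqrt S) * Real.sqrt S = S := Real.mul_self_sqrt (le_of_lt hSpos)
  have hsne : Real.sqrt S ≠ 0 := by positivity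
  push_cast
  field_simp
  norm_cast
  rw [sq, hs, div_self (ne_of_gt hSpos)]

lemma pseudoRot_apply {n : ℕ} (θ : ℝ) (x : Fin n → ℂ) (i j : Fin n) :
    pseudoRot θ x i j
      = (if i = j then (1:ℂ) else 0) - (1 - Complex.exp (θ * Complex.I)) * (x i * (starRingEnd ℂ) (x j)) := by
  simp [pseudoRot, Matrix.sub_apply, Matrix.one_apply, Matrix.smul_apply, Matrix.vecMulVec_apply,
    Pi.star_apply, RCLike.star_def]

lemma pseudoRot_zero {n : ℕ} (x : Fin n → ℂ) : pseudoRot 0 x = 1 := by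
  simp [pseudoRot]

lemma pseudoRot_mulVec {n : ℕ} (θ : ℝ) (x : Fin n → ℂ) (z : Fin n → ℂ) :
    pseudoRot θ x *ᵥ z = z - ((1 - Complex.exp (θ * Complex.I)) * (star x ⬝ᵥ z)) • x := by
  funext i
  set e := Complex.exp (θ * Complex.I)
  have h1 : (pseudoRot θ x *ᵥ z) i = ∑ j, pseudoRot θ x i j * z j := rfl
  have h2 : ∀ j : Fin n, pseudoRot θ x i j * z j
      = (if i = j then z j else 0) - (1 - e) * (x i * ((starRingEnd ℂ) (x j) * z j)) := by
    intro j; rw [pseudoRot_apply]; by_cases h : i = j <;> simp [h] <;> ring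
  rw [h1, Finset.sum_congr rfl (fun j _ => h2 j), Finset.sum_sub_distrib,
    Finset.sum_ite_eq, if_pos (Finset.mem_univ i)]
  have h3 : ∑ j, (1 - e) * (x i * ((starRingEnd ℂ) (x j) * z j))
      = ((1 - e) * (∑ j, (starRingEnd ℂ) (x j) * z j)) * x i := by
    rw [Finset.mul_sum, Finset.sum_mul]
    exact Finset.sum_congr rfl (fun j _ => by ring)
  rw [h3]
  rfl

lemma vecMulVec_sq {n : ℕ} (x : Fin n → ℂ) (hx : star x ⬝ᵥ x = 1) :
    Matrix.vecMulVec x (star x) * Matrix.vecMulVec x (star x) = Matrix.vecMulVec x (star x) := by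
  ext i j
  simp only [Matrix.mul_apply, Matrix.vecMulVec_apply, Pi.star_apply]
  have : ∑ k, x i * star (x k) * (x k * star (x j))
      = (x i * star (x j)) * ∑ k, star (x k) * x k := by
    rw [Finset.mul_sum]; congr 1; funext k; ring
  rw [this]
  have : (∑ k, star (x k) * x k) = 1 := hx
  rw [this, mul_one]

lemma pseudoRot_unitary {n : ℕ} (θ : ℝ) (x : Fin n → ℂ) (hx : star x ⬝ᵥ x = 1) :
    (pseudoRot θ x)ᴴ * pseudoRot θ x = 1 := by
  rw [pseudoRot_conjTranspose]
  unfold pseudoRot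
  set V := Matrix.vecMulVec x (star x) with hV
  set e := Complex.exp (θ * Complex.I)
  set e' := Complex.exp ((-θ : ℝ) * Complex.I)
  have hee : e' * e = 1 := by
    have := exp_unit θ
    rw [conj_exp_mul_I] at this
    simpa [e, e', show ((-θ : ℝ) : ℂ) * Complex.I = -(↑θ * Complex.I) by push_cast; ring] using this
  have hVV := vecMulVec_sq x hx
  rw [← hV] at hVV
  have hc : (1 - e) + (1 - e') - (1 - e') * (1 - e) = 0 := by
    have : (1 - e) + (1 - e') - (1 - e') * (1 - e) = 1 - e' * e := by ring
    rw [this, hee, sub_self]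
  calc (1 - (1 - e') • V) * (1 - (1 - e) • V)
      = 1 - ((1 - e) + (1 - e') - (1 - e') * (1 - e)) • V := by
        simp only [Matrix.sub_mul, Matrix.mul_sub, Matrix.smul_mul, Matrix.mul_smul,
          Matrix.one_mul, Matrix.mul_one, smul_smul, hVV]
        match_scalars <;> ring
    _ = 1 := by rw [hc, zero_smul, sub_zero]

-- K5 : isometry preserves dot products
lemma dot_mulVec_eq {n N : ℕ} (P : Matrix (Fin n) (Fin N) ℂ) (hP : Pᴴ * P = 1)
    (u v : Fin N → ℂ) : star (P *ᵥ u) ⬝ᵥ (P *ᵥ v) = star u ⬝ᵥ v := by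
  rw [Matrix.star_mulVec, Matrix.dotProduct_mulVec, Matrix.vecMul_vecMul, hP,
    Matrix.vecMul_one]

-- K1
lemma vecMulVec_mulVec_conj {n N : ℕ} (P : Matrix (Fin n) (Fin N) ℂ) (u : Fin N → ℂ) :
    Matrix.vecMulVec (P *ᵥ u) (star (P *ᵥ u)) = P * Matrix.vecMulVec u (star u) * Pᴴ := by
  ext i j
  simp only [Matrix.mul_apply, Matrix.vecMulVec_apply, Matrix.conjTranspose_apply,
    Matrix.mulVec, dotProduct, Pi.star_apply, RCLike.star_def, map_sum, _root_.map_mul]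
  rw [Finset.sum_mul_sum]
  rw [Finset.sum_comm]
  refine Finset.sum_congr rfl (fun l _ => ?_)
  rw [Finset.sum_mul]
  refine Finset.sum_congr rfl (fun k _ => by ring)

-- K2
lemma pseudoRot_mulVec_form {n N : ℕ} (θ : ℝ) (P : Matrix (Fin n) (Fin N) ℂ) (u : Fin N → ℂ) :
    pseudoRot θ (P *ᵥ u) = 1 + P * (pseudoRot θ u - 1) * Pᴴ := by
  unfold pseudoRot
  rw [vecMulVec_mulVec_conj]
  rw [show (1 : Matrix (Fin N) (Fin N) ℂ) - (1 - Complex.exp (θ * Complex.I)) • Matrix.vecMulVec u (star u) - 1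
      = -((1 - Complex.exp (θ * Complex.I)) • Matrix.vecMulVec u (star u)) from by abel]
  rw [Matrix.mul_neg, Matrix.neg_mul, Matrix.mul_smul, Matrix.smul_mul]
  abel

-- K3/K4
lemma prod_conj_form {n N : ℕ} (P : Matrix (Fin n) (Fin N) ℂ) (hP : Pᴴ * P = 1)
    (A B : Matrix (Fin N) (Fin N) ℂ) :
    (1 + P * (A - 1) * Pᴴ) * (1 + P * (B - 1) * Pᴴ) = 1 + P * (A * B - 1) * Pᴴ := by
  have key : (P * (A - 1) * Pᴴ) * (P * (B - 1) * Pᴴ) = P * ((A - 1) * (B - 1)) * Pᴴ := by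
    calc (P * (A - 1) * Pᴴ) * (P * (B - 1) * Pᴴ)
        = P * (A - 1) * (Pᴴ * P) * ((B - 1) * Pᴴ) := by
          simp only [Matrix.mul_assoc]
      _ = P * ((A - 1) * (B - 1)) * Pᴴ := by rw [hP, Matrix.mul_one]; simp only [Matrix.mul_assoc]
  have expand : ∀ X Y : Matrix (Fin n) (Fin n) ℂ, (1 + X) * (1 + Y) = 1 + X + (Y + X * Y) := by
    intro X Y; noncomm_ring
  have h3 : P * (A - 1) * Pᴴ + (P * (B - 1) * Pᴴ + P * ((A - 1) * (B - 1)) * Pᴴ)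
      = P * (A * B - 1) * Pᴴ := by
    have h2 : (A - 1) + ((B - 1) + (A - 1) * (B - 1)) = A * B - 1 := by noncomm_ring
    rw [← h2]
    simp only [Matrix.mul_add, Matrix.add_mul]
  rw [expand, key, add_assoc, h3]

lemma pseudoRot_prod_conj {n N : ℕ} (θ θ' : ℝ) (P : Matrix (Fin n) (Fin N) ℂ) (hP : Pᴴ * P = 1)
    (u u' : Fin N → ℂ) :
    pseudoRot θ (P *ᵥ u) * pseudoRot θ' (P *ᵥ u')
      = 1 + P * (pseudoRot θ u * pseudoRot θ' u' - 1) * Pᴴ := by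
  rw [pseudoRot_mulVec_form, pseudoRot_mulVec_form, prod_conj_form P hP]

-- matrix equality from action on vectors
lemma matrix_ext_mulVec {N : ℕ} {A B : Matrix (Fin N) (Fin N) ℂ}
    (h : ∀ z, A *ᵥ z = B *ᵥ z) : A = B := by
  ext i j
  have := congrFun (h (Pi.single j 1)) i
  simpa [Matrix.mulVec_single] using this

-- pseudoRot with axis e₁ in dimension 2 is the diagonal matrix diag(e^{iθ},1)
lemma pseudoRot_e1 (θ : ℝ) :
    pseudoRot θ (![1,0] : Fin 2 → ℂ) = !![Complex.exp (θ * Complex.I), 0; 0, 1] := by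
  ext i j
  rw [pseudoRot_apply]
  fin_cases i <;> fin_cases j <;> simp <;> ring

lemma det_pseudoRot_two (θ : ℝ) (u : Fin 2 → ℂ)
    (hu : star u ⬝ᵥ u = 1) :
    (pseudoRot θ u).det = Complex.exp (θ * Complex.I) := by
  have hu' : (starRingEnd ℂ) (u 0) * u 0 + (starRingEnd ℂ) (u 1) * u 1 = 1 := by
    simpa [dotProduct, Fin.sum_univ_two, Pi.star_apply, RCLike.star_def] using hu
  rw [Matrix.det_fin_two]
  simp only [pseudoRot_apply]
  simp only [Fin.isValue, show ((0:Fin 2) = 0) = True from by simp, show ((1:Fin 2) = 1) = True from by simp,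
    show ((0:Fin 2) = 1) = False from by simp, show ((1:Fin 2) = 0) = False from by simp,
    if_true, if_false]
  linear_combination (Complex.exp (θ * Complex.I) - 1) * hu'

-- orthonormal decomposition in ℂ²
lemma decomp_two (f : Fin 2 → ℂ) (hf : star f ⬝ᵥ f = 1) (z : Fin 2 → ℂ) :
    z = (star f ⬝ᵥ z) • f + (star (![-(starRingEnd ℂ) (f 1), (starRingEnd ℂ) (f 0)]) ⬝ᵥ z)
        • (![-(starRingEnd ℂ) (f 1), (starRingEnd ℂ) (f 0)] : Fin 2 → ℂ) := by
  have hf' : (starRingEnd ℂ) (f 0) * f 0 + (starRingEnd ℂ) (f 1) * f 1 = 1 := by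
    simpa [dotProduct, Fin.sum_univ_two, Pi.star_apply, RCLike.star_def] using hf
  funext i
  fin_cases i
  · simp [dotProduct, Fin.sum_univ_two, Pi.star_apply, RCLike.star_def]
    linear_combination (-(z 0)) * hf'
  · simp [dotProduct, Fin.sum_univ_two, Pi.star_apply, RCLike.star_def]
    linear_combination (-(z 1)) * hf'

lemma dot_mulVec_eq' {N : ℕ} (M : Matrix (Fin N) (Fin N) ℂ) (hM : Mᴴ * M = 1)
    (u v : Fin N → ℂ) : star (M *ᵥ u) ⬝ᵥ (M *ᵥ v) = star u ⬝ᵥ v := by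
  rw [Matrix.star_mulVec, Matrix.dotProduct_mulVec, Matrix.vecMul_vecMul, hM, Matrix.vecMul_one]

lemma exists_pseudoRot_of_fix (M : Matrix (Fin 2) (Fin 2) ℂ) (hM : Mᴴ * M = 1)
    (f : Fin 2 → ℂ) (hf : star f ⬝ᵥ f = 1) (hfix : M *ᵥ f = f) :
    ∃ φ : ℝ, M = pseudoRot φ (![-(starRingEnd ℂ) (f 1), (starRingEnd ℂ) (f 0)] : Fin 2 → ℂ) := by
  set v : Fin 2 → ℂ := ![-(starRingEnd ℂ) (f 1), (starRingEnd ℂ) (f 0)] with hv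
  have hf' : (starRingEnd ℂ) (f 0) * f 0 + (starRingEnd ℂ) (f 1) * f 1 = 1 := by
    simpa [dotProduct, Fin.sum_univ_two, Pi.star_apply, RCLike.star_def] using hf
  have hvf : star v ⬝ᵥ f = 0 := by
    simp [hv, dotProduct, Fin.sum_univ_two, Pi.star_apply, RCLike.star_def]
    ring
  have hfv : star f ⬝ᵥ v = 0 := by
    simp [hv, dotProduct, Fin.sum_univ_two, Pi.star_apply, RCLike.star_def]
    ring
  have hvv : star v ⬝ᵥ v = 1 := by
    simp [hv, dotProduct, Fin.sum_univ_two, Pi.star_apply, RCLike.star_def]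
    linear_combination hf'
  set β : ℂ := star v ⬝ᵥ (M *ᵥ v) with hβdef
  have hMv : M *ᵥ v = β • v := by
    have hdec := decomp_two f hf (M *ᵥ v)
    rw [← hv] at hdec
    have h1 : star f ⬝ᵥ (M *ᵥ v) = 0 := by
      calc star f ⬝ᵥ (M *ᵥ v) = star (M *ᵥ f) ⬝ᵥ (M *ᵥ v) := by rw [hfix]
        _ = star f ⬝ᵥ v := dot_mulVec_eq' M hM f v
        _ = 0 := hfv
    rw [h1, zero_smul, zero_add] at hdec
    exact hdec.symm ▸ rfl
  have hβ : (starRingEnd ℂ) β * β = 1 := by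
    have h2 : star (M *ᵥ v) ⬝ᵥ (M *ᵥ v) = 1 := by rw [dot_mulVec_eq' M hM, hvv]
    rw [hMv] at h2
    rw [star_smul, smul_dotProduct, dotProduct_smul, hvv] at h2
    simpa [RCLike.star_def] using h2
  obtain ⟨φ, hφ⟩ := exists_angle β hβ
  refine ⟨φ, matrix_ext_mulVec fun z => ?_⟩
  rw [pseudoRot_mulVec, hφ]
  have hdecz := decomp_two f hf z
  rw [← hv] at hdecz
  set p := star f ⬝ᵥ z
  set q := star v ⬝ᵥ z
  have hvz : star v ⬝ᵥ z = q := rfl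
  calc M *ᵥ z = M *ᵥ (p • f + q • v) := by rw [← hdecz]
    _ = p • (M *ᵥ f) + q • (M *ᵥ v) := by
        rw [Matrix.mulVec_add, Matrix.mulVec_smul, Matrix.mulVec_smul]
    _ = p • f + (q * β) • v := by rw [hfix, hMv, smul_smul]
    _ = z - ((1 - β) * q) • v := by
        rw [hdecz]
        rw [show p • f + q • v - ((1 - β) * q) • v = p • f + (q * β) • v from by
          match_scalars <;> ring]
    _ = z - ((1 - β) * (star v ⬝ᵥ z)) • v := by rw [hvz]

lemma conj_mul_self_eq_zero {z : ℂ} (h : (starRingEnd ℂ) z * z = 0) : z = 0 := by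
  have : (Complex.normSq z : ℂ) = 0 := by rw [Complex.normSq_eq_conj_mul_self, h]
  have : Complex.normSq z = 0 := by exact_mod_cast this
  exact Complex.normSq_eq_zero.mp this

lemma two_dim_main (θ θ' : ℝ) (u u' : Fin 2 → ℂ)
    (hu : star u ⬝ᵥ u = 1) (hu' : star u' ⬝ᵥ u' = 1) :
    ∃ (θt θt' : ℝ) (v : Fin 2 → ℂ), star v ⬝ᵥ v = 1 ∧ v 1 ≠ 0 ∧
      pseudoRot θ u * pseudoRot θ' u' = pseudoRot θt ![1,0] * pseudoRot θt' v := by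
  set U : Matrix (Fin 2) (Fin 2) ℂ := pseudoRot θ u * pseudoRot θ' u' with hUdef
  set D : ℂ := Complex.exp (θ * Complex.I) * Complex.exp (θ' * Complex.I) with hDdef
  have hU : Uᴴ * U = 1 := by
    rw [hUdef, Matrix.conjTranspose_mul, Matrix.mul_assoc,
      ← Matrix.mul_assoc (pseudoRot θ u)ᴴ, pseudoRot_unitary θ u hu, Matrix.one_mul,
      pseudoRot_unitary θ' u' hu']
  have hUU : U * Uᴴ = 1 := mul_eq_one_comm.mp hU
  have hdet : U.det = D := by
    rw [hUdef, Matrix.det_mul, det_pseudoRot_two θ u hu, det_pseudoRot_two θ' u' hu']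
  have hD : (starRingEnd ℂ) D * D = 1 := by
    rw [hDdef]
    have h1 := exp_unit θ
    have h2 := exp_unit θ'
    rw [_root_.map_mul]
    calc (starRingEnd ℂ) (Complex.exp (θ * Complex.I)) * (starRingEnd ℂ) (Complex.exp (θ' * Complex.I)) *
        (Complex.exp (θ * Complex.I) * Complex.exp (θ' * Complex.I))
        = ((starRingEnd ℂ) (Complex.exp (θ * Complex.I)) * Complex.exp (θ * Complex.I)) *
          ((starRingEnd ℂ) (Complex.exp (θ' * Complex.I)) * Complex.exp (θ' * Complex.I)) := by ring
      _ = 1 := by rw [h1, h2, one_mul]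
  set a : ℂ := U 0 0
  set b : ℂ := U 0 1
  set c : ℂ := U 1 0
  set d : ℂ := U 1 1
  -- adjugate relations
  have hadj : U.adjugate = U.det • Uᴴ := by
    calc U.adjugate = 1 * U.adjugate := (Matrix.one_mul _).symm
      _ = (Uᴴ * U) * U.adjugate := by rw [hU]
      _ = Uᴴ * (U * U.adjugate) := Matrix.mul_assoc _ _ _
      _ = Uᴴ * (U.det • 1) := by rw [Matrix.mul_adjugate]
      _ = U.det • Uᴴ := by rw [Matrix.mul_smul, Matrix.mul_one]
  have hent : (!![d, -b; -c, a] : Matrix (Fin 2) (Fin 2) ℂ) = D • Uᴴ := by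
    rw [← Matrix.adjugate_fin_two, hadj, hdet]
  have h_da : d = D * (starRingEnd ℂ) a := by
    have := congrFun (congrFun hent 0) 0
    simpa [Matrix.smul_apply, Matrix.conjTranspose_apply, RCLike.star_def] using this
  have h_ad : a = D * (starRingEnd ℂ) d := by
    have := congrFun (congrFun hent 1) 1
    simpa [Matrix.smul_apply, Matrix.conjTranspose_apply, RCLike.star_def] using this
  have hdet2 : a * d - b * c = D := by
    rw [← hdet, Matrix.det_fin_two]
  -- unitarity entries
  have hUcol0 : (starRingEnd ℂ) a * a + (starRingEnd ℂ) c * c = 1 := by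
    have := congrFun (congrFun hU 0) 0
    simpa [Matrix.mul_apply, Fin.sum_univ_two, Matrix.conjTranspose_apply, Matrix.one_apply,
      RCLike.star_def] using this
  have hUcol1 : (starRingEnd ℂ) b * b + (starRingEnd ℂ) d * d = 1 := by
    have := congrFun (congrFun hU 1) 1
    simpa [Matrix.mul_apply, Fin.sum_univ_two, Matrix.conjTranspose_apply, Matrix.one_apply,
      RCLike.star_def] using this
  have hUrow1 : c * (starRingEnd ℂ) c + d * (starRingEnd ℂ) d = 1 := by
    have := congrFun (congrFun hUU 1) 1
    simpa [Matrix.mul_apply, Fin.sum_univ_two, Matrix.conjTranspose_apply, Matrix.one_apply,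
      RCLike.star_def] using this
  by_cases hcase : a = D
  · -- U = diag(D,1)
    have hd1 : d = 1 := by
      rw [h_da, hcase]; linear_combination hD
    have hb0 : b = 0 := by
      apply conj_mul_self_eq_zero
      have := hUcol1
      rw [hd1] at this
      simpa using this
    have hc0 : c = 0 := by
      have := hUrow1
      rw [hd1] at this
      simp only [RingHom.map_one, one_mul, mul_one] at this
      have hcc : (starRingEnd ℂ) c * c = 0 := by linear_combination this
      exact conj_mul_self_eq_zero hcc
    refine ⟨θ + θ', 0, ![0,1], by simp [dotProduct, Fin.sum_univ_two], by simp, ?_⟩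
    rw [pseudoRot_zero, Matrix.mul_one, pseudoRot_e1]
    have hexp : Complex.exp (((θ + θ' : ℝ) : ℂ) * Complex.I) = D := by
      rw [hDdef, ← Complex.exp_add]
      congr 1
      push_cast
      ring
    rw [hexp]
    ext i j
    fin_cases i <;> fin_cases j <;>
      simp only [Matrix.cons_val', Matrix.cons_val_zero, Matrix.cons_val_one, Matrix.head_cons,
        Matrix.head_fin_const, Matrix.empty_val', Matrix.cons_val_fin_one, Matrix.of_apply] <;>
      first
        | exact hcase
        | exact hb0
        | exact hc0
        | exact hd1
  · -- a ≠ D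
    have hd_ne : (1 : ℂ) - d ≠ 0 := by
      intro h
      have hd1 : d = 1 := by linear_combination -h
      apply hcase
      rw [h_ad, hd1, RingHom.map_one, mul_one]
    have hden : a - D ≠ 0 := sub_ne_zero.mpr hcase
    set t : ℂ := (1 - d) / (a - D) with htdef
    have ht1 : t * (a - D) = 1 - d := div_mul_cancel₀ _ hden
    have htne : t ≠ 0 := by
      intro h
      rw [h, zero_mul] at ht1
      exact hd_ne ht1.symm
    have hcd : (starRingEnd ℂ) d = (starRingEnd ℂ) D * a := by
      rw [h_da, _root_.map_mul, Complex.conj_conj]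
    have hca : (starRingEnd ℂ) a = (starRingEnd ℂ) D * d := by
      rw [h_ad, _root_.map_mul, Complex.conj_conj]
    have key : (1 - (starRingEnd ℂ) d) * (1 - d) = ((starRingEnd ℂ) a - (starRingEnd ℂ) D) * (a - D) := by
      linear_combination (-(1-d)) * hD + (-(1-d)) * hcd + (-(a-D)) * hca
    have hdenc : (starRingEnd ℂ) a - (starRingEnd ℂ) D ≠ 0 := by
      intro h
      apply hden
      have h2 : (starRingEnd ℂ) ((starRingEnd ℂ) a - (starRingEnd ℂ) D) = 0 := by rw [h, map_zero]
      simpa [map_sub, Complex.conj_conj] using h2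
    have ht : (starRingEnd ℂ) t * t = 1 := by
      have hconj : (starRingEnd ℂ) t = (1 - (starRingEnd ℂ) d) / ((starRingEnd ℂ) a - (starRingEnd ℂ) D) := by
        rw [htdef, map_div₀, map_sub, map_sub, RingHom.map_one]
      rw [hconj, htdef, div_mul_div_comm, div_eq_one_iff_eq (mul_ne_zero hdenc hden)]
      exact key
    set T : Matrix (Fin 2) (Fin 2) ℂ := !![t, 0; 0, 1] with hTdef
    set M : Matrix (Fin 2) (Fin 2) ℂ := T * U with hMdef
    have e00 : M 0 0 = t * a := by
      simp [hMdef, hTdef, Matrix.mul_apply, Matrix.vecMul, dotProduct, Fin.sum_univ_two]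
      exact Or.inl rfl
    have e01 : M 0 1 = t * b := by
      simp [hMdef, hTdef, Matrix.mul_apply, Matrix.vecMul, dotProduct, Fin.sum_univ_two]
      exact Or.inl rfl
    have e10 : M 1 0 = c := by
      simp [hMdef, hTdef, Matrix.mul_apply, Matrix.vecMul, dotProduct, Fin.sum_univ_two]
      rfl
    have e11 : M 1 1 = d := by
      simp [hMdef, hTdef, Matrix.mul_apply, Matrix.vecMul, dotProduct, Fin.sum_univ_two]
      rfl
    have hTT : Tᴴ * T = 1 := by
      ext i j
      fin_cases i <;> fin_cases j <;>
        simp [hTdef, Matrix.mul_apply, Fin.sum_univ_two, Matrix.conjTranspose_apply,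
          Matrix.one_apply, RCLike.star_def] <;>
        first
          | exact ht
          | rfl
    have hMM : Mᴴ * M = 1 := by
      rw [hMdef, Matrix.conjTranspose_mul, Matrix.mul_assoc, ← Matrix.mul_assoc Tᴴ T U, hTT,
        Matrix.one_mul, hU]
    have htrM : M 0 0 + M 1 1 = 1 + (M 0 0 * M 1 1 - M 0 1 * M 1 0) := by
      rw [e00, e01, e10, e11]
      linear_combination ht1 - t * hdet2
    -- inverse angle
    have hinv : (starRingEnd ℂ) (t⁻¹) * t⁻¹ = 1 := by
      rw [map_inv₀, ← mul_inv, ht, inv_one]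
    obtain ⟨θt, hθt⟩ := exists_angle t⁻¹ hinv
    have hTinv : (!![t⁻¹, 0; 0, 1] : Matrix (Fin 2) (Fin 2) ℂ) * T = 1 := by
      ext i j
      fin_cases i <;> fin_cases j <;>
        simp [hTdef, Matrix.mul_apply, Fin.sum_univ_two, Matrix.one_apply, inv_mul_cancel₀ htne]
    have hstep : ∀ R : Matrix (Fin 2) (Fin 2) ℂ, M = R →
        pseudoRot θt ![1,0] * R = U := by
      intro R hR
      rw [pseudoRot_e1, hθt, ← hR, hMdef, ← Matrix.mul_assoc, hTinv, Matrix.one_mul]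
    by_cases hM01 : M 0 1 = 0
    · by_cases hM00 : M 0 0 = 1
      · -- M fixes e₀
        have h1 : t * a = 1 := by rw [← e00, hM00]
        have h2 : (starRingEnd ℂ) t * (starRingEnd ℂ) a = 1 := by
          rw [← _root_.map_mul, h1, RingHom.map_one]
        have haa : (starRingEnd ℂ) a * a = 1 := by
          calc (starRingEnd ℂ) a * a = ((starRingEnd ℂ) t * t) * ((starRingEnd ℂ) a * a) := by
                rw [ht, one_mul]
            _ = ((starRingEnd ℂ) t * (starRingEnd ℂ) a) * (t * a) := by ring
            _ = 1 := by rw [h2, h1, mul_one]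
        have hcc : (starRingEnd ℂ) c * c = 0 := by linear_combination hUcol0 - haa
        have hc0 : c = 0 := conj_mul_self_eq_zero hcc
        have hfix : M *ᵥ (![1,0] : Fin 2 → ℂ) = ![1,0] := by
          funext i
          fin_cases i <;>
            simp [Matrix.mulVec, dotProduct, Fin.sum_univ_two]
          · exact hM00
          · rw [e10]; exact hc0
        obtain ⟨φ, hφM⟩ := exists_pseudoRot_of_fix M hMM ![1,0]
          (by simp [dotProduct, Fin.sum_univ_two]) hfix
        have hveq : (![-(starRingEnd ℂ) ((![1,0] : Fin 2 → ℂ) 1), (starRingEnd ℂ) ((![1,0] : Fin 2 → ℂ) 0)] : Fin 2 → ℂ) = ![0,1] := by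
          funext i; fin_cases i <;> simp
        rw [hveq] at hφM
        exact ⟨θt, φ, ![0,1], by simp [dotProduct, Fin.sum_univ_two], by simp,
          (hstep _ hφM).symm⟩
      · -- contradiction
        exfalso
        have hcomp : (M 1 1 - 1) * (1 - M 0 0) = 0 := by
          linear_combination htrM - M 1 0 * hM01
        rcases mul_eq_zero.mp hcomp with h | h
        · apply hd_ne
          rw [← e11]
          linear_combination -h
        · exact hM00 (by linear_combination -h)
    · -- generic case: nonzero fixed vector with first coordinate ≠ 0
      set f₀ : Fin 2 → ℂ := ![M 0 1, 1 - M 0 0] with hf₀def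
      have hf₀ne : f₀ ≠ 0 := by
        intro h
        apply hM01
        have := congrFun h 0
        simpa [hf₀def] using this
      have hfix₀ : M *ᵥ f₀ = f₀ := by
        funext i
        fin_cases i
        · simp [hf₀def, Matrix.mulVec, dotProduct, Fin.sum_univ_two]
          ring
        · simp [hf₀def, Matrix.mulVec, dotProduct, Fin.sum_univ_two]
          linear_combination htrM
      obtain ⟨r, hr, hrunit⟩ := exists_real_smul_unit f₀ hf₀ne
      set f : Fin 2 → ℂ := (r : ℂ) • f₀ with hfdef
      have hffix : M *ᵥ f = f := by rw [hfdef, Matrix.mulVec_smul, hfix₀]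
      obtain ⟨φ, hφM⟩ := exists_pseudoRot_of_fix M hMM f hrunit hffix
      set v : Fin 2 → ℂ := ![-(starRingEnd ℂ) (f 1), (starRingEnd ℂ) (f 0)] with hvdef
      have hf' : (starRingEnd ℂ) (f 0) * f 0 + (starRingEnd ℂ) (f 1) * f 1 = 1 := by
        simpa [dotProduct, Fin.sum_univ_two, Pi.star_apply, RCLike.star_def] using hrunit
      have hvunit : star v ⬝ᵥ v = 1 := by
        simp [hvdef, dotProduct, Fin.sum_univ_two, Pi.star_apply, RCLike.star_def]
        linear_combination hf'
      have hv1 : v 1 ≠ 0 := by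
        have hf0 : f 0 = (r : ℂ) * M 0 1 := by simp [hfdef, hf₀def]
        have : f 0 ≠ 0 := by
          rw [hf0]
          exact mul_ne_zero (by exact_mod_cast ne_of_gt hr) hM01
        simp [hvdef]
        intro h
        exact this (by simpa using congrArg (starRingEnd ℂ) h)
      exact ⟨θt, φ, v, hvunit, hv1, (hstep _ hφM).symm⟩

lemma mem_stdSubspace {n k : ℕ} {z : Fin n → ℂ} :
    z ∈ stdSubspace n k ↔ ∀ i : Fin n, k ≤ (i : ℕ) → z i = 0 := Iff.rfl

theorem stmt6 {n : ℕ} (θ θ' : ℝ) (x x' : Fin n → ℂ) (m : ℕ)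
    (hx : star x ⬝ᵥ x = 1) (hx' : star x' ⬝ᵥ x' = 1)
    (hmx : minBelongs x m) (hmx' : minBelongs x' m)
    (hlines : Submodule.span ℂ {x} ≠ Submodule.span ℂ {x'}) :
    Module.finrank ℂ ↥(Submodule.span ℂ {x, x'} ⊓ stdSubspace n (m - 1)) = 1 ∧
    ∃ (θt θt' : ℝ) (xt xt' : Fin n → ℂ) (k : ℕ),
      k ≤ m - 1 ∧
      star xt ⬝ᵥ xt = 1 ∧
      Submodule.span ℂ {xt} = Submodule.span ℂ {x, x'} ⊓ stdSubspace n (m - 1) ∧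
      minBelongs xt k ∧
      star xt' ⬝ᵥ xt' = 1 ∧ minBelongs xt' m ∧
      pseudoRot θ x * pseudoRot θ' x' = pseudoRot θt xt * pseudoRot θt' xt' := by
  classical
  obtain ⟨hxhigh, i₀, hi₀, ha⟩ := hmx
  obtain ⟨hx'high, i₁, hi₁, ha'pre⟩ := hmx'
  have hii : i₁ = i₀ := by
    apply Fin.ext
    omega
  rw [hii] at ha'pre
  set a : ℂ := x i₀ with hadef
  set a' : ℂ := x' i₀ with ha'def
  have ha' : a' ≠ 0 := ha'pre
  have hi₀val : (i₀ : ℕ) = m - 1 := by omega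
  -- the vector y spanning the intersection
  set y : Fin n → ℂ := a' • x - a • x' with hydef
  have hy_mem : ∀ i : Fin n, m - 1 ≤ (i : ℕ) → y i = 0 := by
    intro i hi
    by_cases h : (i : ℕ) = m - 1
    · have : i = i₀ := Fin.ext (by omega)
      rw [this]
      simp [hydef, mul_comm]
      exact sub_self _
    · have him : m ≤ (i : ℕ) := by omega
      simp [hydef, hxhigh i him, hx'high i him]
  have hy_ne : y ≠ 0 := by
    intro h
    apply hlines
    have hxx' : a' • x = a • x' := by
      have := sub_eq_zero.mp h
      exact this
    calc Submodule.span ℂ {x} = Submodule.span ℂ {a' • x} :=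
          (Submodule.span_singleton_smul_eq (isUnit_iff_ne_zero.mpr ha') x).symm
      _ = Submodule.span ℂ {a • x'} := by rw [hxx']
      _ = Submodule.span ℂ {x'} := Submodule.span_singleton_smul_eq (isUnit_iff_ne_zero.mpr ha) x'
  obtain ⟨r, hr, hxtunit⟩ := exists_real_smul_unit y hy_ne
  set xt : Fin n → ℂ := (r : ℂ) • y with hxtdef
  have hrne : ((r : ℝ) : ℂ) ≠ 0 := by exact_mod_cast ne_of_gt hr
  have hxt_ne : xt ≠ 0 := smul_ne_zero hrne hy_ne
  have hxt_mem : ∀ i : Fin n, m - 1 ≤ (i : ℕ) → xt i = 0 := by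
    intro i hi
    simp [hxtdef, hy_mem i hi]
  have hxt_i₀ : xt i₀ = 0 := hxt_mem i₀ (le_of_eq hi₀val.symm)
  -- span equality
  have hspan : Submodule.span ℂ {xt} = Submodule.span ℂ {x, x'} ⊓ stdSubspace n (m - 1) := by
    apply le_antisymm
    · rw [Submodule.span_le, Set.singleton_subset_iff]
      refine Submodule.mem_inf.mpr ⟨?_, ?_⟩
      · refine Submodule.mem_span_pair.mpr ⟨(r : ℂ) * a', -((r : ℂ) * a), ?_⟩
        funext i
        simp [hxtdef, hydef]
        ring
      · exact hxt_mem
    · intro z hz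
      obtain ⟨hz1, hz2⟩ := Submodule.mem_inf.mp hz
      obtain ⟨p, q, hpq⟩ := Submodule.mem_span_pair.mp hz1
      have hzi₀ : z i₀ = 0 := hz2 i₀ (le_of_eq hi₀val.symm)
      have hq : p * a + q * a' = 0 := by
        have h0 := congrFun hpq i₀
        simp only [Pi.add_apply, Pi.smul_apply, smul_eq_mul] at h0
        rw [hzi₀] at h0
        exact h0
      refine Submodule.mem_span_singleton.mpr ⟨p / ((r : ℂ) * a'), ?_⟩
      funext i
      have hxt_i : xt i = (r : ℂ) * (a' * x i - a * x' i) := by simp [hxtdef, hydef]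
      have hz_i : z i = p * x i + q * x' i := by rw [← hpq]; simp
      rw [Pi.smul_apply, smul_eq_mul, hxt_i, hz_i]
      field_simp
      linear_combination (-(x' i)) * hq
  -- minBelongs for xt
  obtain ⟨j, hjmem, hjmax⟩ :
      ∃ j : Fin n, xt j ≠ 0 ∧ ∀ i : Fin n, xt i ≠ 0 → (i : ℕ) ≤ (j : ℕ) := by
    have hSne : (Finset.filter (fun i => xt i ≠ 0) Finset.univ).Nonempty := by
      obtain ⟨i, hi⟩ := Function.ne_iff.mp hxt_ne
      exact ⟨i, by simpa using hi⟩
    set j := (Finset.filter (fun i => xt i ≠ 0) Finset.univ).max' hSne with hj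
    refine ⟨j, ?_, ?_⟩
    · have := (Finset.filter (fun i => xt i ≠ 0) Finset.univ).max'_mem hSne
      simpa using this
    · intro i hi
      exact Finset.le_max' _ i (by simp [hi])
  set k : ℕ := (j : ℕ) + 1 with hkdef
  have hkle : k ≤ m - 1 := by
    have : ¬ (m - 1 ≤ (j : ℕ)) := fun h => hjmem (hxt_mem j h)
    omega
  have hmb_xt : minBelongs xt k := by
    constructor
    · intro i hi
      by_contra hne
      have := hjmax i hne
      omega
    · exact ⟨j, rfl, hjmem⟩
  -- orthogonal complement vector w
  set c₁ : ℂ := star xt ⬝ᵥ x with hc₁def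
  set w₀ : Fin n → ℂ := x - c₁ • xt with hw₀def
  have hw₀i₀ : w₀ i₀ = a := by simp [hw₀def, hxt_i₀]; rfl
  have hw₀ne : w₀ ≠ 0 := by
    intro h
    apply ha
    rw [← hw₀i₀, h]
    rfl
  have hw₀orth : star xt ⬝ᵥ w₀ = 0 := by
    rw [hw₀def, dotProduct_sub, dotProduct_smul, hxtunit]
    simp [hc₁def]
  obtain ⟨r', hr', hwunit⟩ := exists_real_smul_unit w₀ hw₀ne
  set w : Fin n → ℂ := ((r' : ℝ) : ℂ) • w₀ with hwdef
  have hr'ne : ((r' : ℝ) : ℂ) ≠ 0 := by exact_mod_cast ne_of_gt hr'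
  have hworth : star xt ⬝ᵥ w = 0 := by
    rw [hwdef, dotProduct_smul, hw₀orth, smul_zero]
  have hw_i₀ : w i₀ = (r' : ℂ) * a := by rw [hwdef, Pi.smul_apply, hw₀i₀, smul_eq_mul]
  have hw_high : ∀ i : Fin n, m ≤ (i : ℕ) → w i = 0 := by
    intro i hi
    have h1 : xt i = 0 := hxt_mem i (by omega)
    simp [hwdef, hw₀def, hxhigh i hi, h1]
  -- the isometry P
  set P : Matrix (Fin n) (Fin 2) ℂ := Matrix.of (fun i j => ![xt i, w i] j) with hPdef
  have hP0 : ∀ i, P i 0 = xt i := fun i => rfl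
  have hP1 : ∀ i, P i 1 = w i := fun i => rfl
  have hPP : Pᴴ * P = 1 := by
    ext jj kk
    fin_cases jj <;> fin_cases kk
    · simpa [Matrix.mul_apply, Matrix.conjTranspose_apply, hPdef, Matrix.one_apply,
        dotProduct, RCLike.star_def] using hxtunit
    · simpa [Matrix.mul_apply, Matrix.conjTranspose_apply, hPdef, Matrix.one_apply,
        dotProduct, RCLike.star_def] using hworth
    · have := congrArg (starRingEnd ℂ) hworth
      simpa [Matrix.mul_apply, Matrix.conjTranspose_apply, hPdef, Matrix.one_apply,
        dotProduct, RCLike.star_def, map_sum, _root_.map_mul, mul_comm] using this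
    · simpa [Matrix.mul_apply, Matrix.conjTranspose_apply, hPdef, Matrix.one_apply,
        dotProduct, RCLike.star_def] using hwunit
  -- coordinates of x and x'
  set c₂ : ℂ := ((r' : ℝ) : ℂ)⁻¹ with hc₂def
  have hx_dec : x = P *ᵥ ![c₁, c₂] := by
    funext i
    rw [show (P *ᵥ ![c₁, c₂]) i = P i 0 * c₁ + P i 1 * c₂ from by
      simp [Matrix.mulVec, dotProduct, Fin.sum_univ_two]]
    rw [hP0, hP1, hwdef, hc₂def]
    simp [hw₀def]
    field_simp
    ring
  have hx'_dec : x' = P *ᵥ ![(a'/a) * c₁ - 1/(a * (r : ℂ)), (a'/a) * c₂] := by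
    funext i
    rw [show (P *ᵥ ![(a'/a) * c₁ - 1/(a * (r : ℂ)), (a'/a) * c₂]) i
        = P i 0 * ((a'/a) * c₁ - 1/(a * (r : ℂ))) + P i 1 * ((a'/a) * c₂) from by
      simp [Matrix.mulVec, dotProduct, Fin.sum_univ_two]]
    rw [hP0, hP1, hwdef, hc₂def]
    have hxt_i : xt i = (r : ℂ) * (a' * x i - a * x' i) := by simp [hxtdef, hydef]
    have hw₀_i : w₀ i = x i - c₁ * xt i := by simp [hw₀def]
    rw [Pi.smul_apply, hw₀_i, hxt_i]
    field_simp
    ring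
  -- apply the 2-dimensional result
  have huu : star (![c₁, c₂] : Fin 2 → ℂ) ⬝ᵥ ![c₁, c₂] = 1 := by
    rw [← dot_mulVec_eq P hPP, ← hx_dec, hx]
  have huu' : star (![(a'/a) * c₁ - 1/(a * (r : ℂ)), (a'/a) * c₂] : Fin 2 → ℂ)
      ⬝ᵥ ![(a'/a) * c₁ - 1/(a * (r : ℂ)), (a'/a) * c₂] = 1 := by
    rw [← dot_mulVec_eq P hPP, ← hx'_dec, hx']
  obtain ⟨θt, θt', v, hvunit, hv1, h2x2⟩ :=
    two_dim_main θ θ' ![c₁, c₂] ![(a'/a) * c₁ - 1/(a * (r : ℂ)), (a'/a) * c₂] huu huu'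
  set xt' : Fin n → ℂ := P *ᵥ v with hxt'def
  have hxt'unit : star xt' ⬝ᵥ xt' = 1 := by
    rw [hxt'def, dot_mulVec_eq P hPP, hvunit]
  have hxt'_i : ∀ i, xt' i = xt i * v 0 + w i * v 1 := by
    intro i
    rw [hxt'def, show (P *ᵥ v) i = P i 0 * v 0 + P i 1 * v 1 from by
      simp [Matrix.mulVec, dotProduct, Fin.sum_univ_two]]
    rw [hP0, hP1]
  have hmb_xt' : minBelongs xt' m := by
    constructor
    · intro i hi
      rw [hxt'_i i, hxt_mem i (by omega), hw_high i hi]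
      ring
    · refine ⟨i₀, hi₀, ?_⟩
      rw [hxt'_i i₀, hxt_i₀, hw_i₀]
      simpa using mul_ne_zero (mul_ne_zero hr'ne ha) hv1
  have hP_e1 : P *ᵥ ![1, 0] = xt := by
    funext i
    rw [show (P *ᵥ ![(1:ℂ), 0]) i = P i 0 * 1 + P i 1 * 0 from by
      simp [Matrix.mulVec, dotProduct, Fin.sum_univ_two]]
    rw [hP0, hP1]
    ring
  have hprod : pseudoRot θ x * pseudoRot θ' x' = pseudoRot θt xt * pseudoRot θt' xt' := by
    rw [hx_dec, hx'_dec, pseudoRot_prod_conj θ θ' P hPP, h2x2, ← pseudoRot_prod_conj θt θt' P hPP,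
      hP_e1, hxt'def]
  exact ⟨by rw [← hspan]; exact finrank_span_singleton hxt_ne,
    θt, θt', xt, xt', k, hkle, hxtunit, hspan, hmb_xt, hxt'unit, hmb_xt', hprod⟩
end

section
/- Suppose x_1,…,x_k are unit vectors in ℂⁿ with x_i ∈_min ℂ^{m_i} and m_1 < m_2 < ⋯ < m_k, and y_1,…,y_{k'} are unit vectors with y_j ∈_min ℂ^{m'_j} and m'_1 < m'_2 < ⋯ < m'_{k'}; suppose all angles θ_i and θ'_j are not integer multiples of 2π. Set A_i = A_{(θ_i,x_i)} and B_j = A_{(θ'_j,y_j)}. If A_1·A_2⋯A_k = B_{k'}·B_{k'−1}⋯B_1, then (a) k = k' and (m_1,…,m_k) = (m'_1,…,m'_{k'}); (b) A_i = B_1⁻¹·B_2⁻¹⋯B_{i−1}⁻¹·B_i·B_{i−1}⋯B_1 for 1 ≤ i ≤ k; and (c) B_i = A_1·A_2⋯A_{i−1}·A_i·A_{i−1}⁻¹⋯A_1⁻¹ for 1 ≤ i ≤ k (with empty products interpreted as the identity). -/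
open Matrix Complex

namespace Stmt8Aux

variable {n : ℕ}

/-- Forward product `A 0 * A 1 * ⋯ * A (k-1)`. -/
noncomputable def Pprod (A : ℕ → Matrix (Fin n) (Fin n) ℂ) (k : ℕ) : Matrix (Fin n) (Fin n) ℂ :=
  (List.ofFn fun i : Fin k => A (i : ℕ)).prod

/-- Reversed product `A (k-1) * ⋯ * A 1 * A 0`. -/
noncomputable def Rprod (A : ℕ → Matrix (Fin n) (Fin n) ℂ) (k : ℕ) : Matrix (Fin n) (Fin n) ℂ :=
  (List.ofFn fun j : Fin k => A (k - 1 - (j : ℕ))).prod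

@[simp] lemma Pprod_zero (A : ℕ → Matrix (Fin n) (Fin n) ℂ) : Pprod A 0 = 1 := rfl

@[simp] lemma Rprod_zero (A : ℕ → Matrix (Fin n) (Fin n) ℂ) : Rprod A 0 = 1 := rfl

lemma Pprod_succ (A : ℕ → Matrix (Fin n) (Fin n) ℂ) (k : ℕ) :
    Pprod A (k + 1) = Pprod A k * A k := by
  unfold Pprod
  rw [List.ofFn_succ']
  simp

lemma Rprod_succ (A : ℕ → Matrix (Fin n) (Fin n) ℂ) (k : ℕ) :
    Rprod A (k + 1) = A k * Rprod A k := by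
  unfold Rprod
  have h : (List.ofFn fun j : Fin (k+1) => A (k + 1 - 1 - (j:ℕ)))
      = A k :: List.ofFn fun j : Fin k => A (k - 1 - (j:ℕ)) := by
    rw [List.ofFn_succ]
    congr 1
    apply congrArg
    funext j
    have : k + 1 - 1 - ((j.succ : Fin (k+1)) : ℕ) = k - 1 - (j : ℕ) := by
      simp only [Fin.val_succ]
      omega
    rw [this]
  rw [h, List.prod_cons]

lemma exp_term_ne_zero {θ : ℝ} (h : ¬ ∃ t : ℤ, θ = 2 * Real.pi * t) :
    (1:ℂ) - Complex.exp (θ * Complex.I) ≠ 0 := by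
  rw [sub_ne_zero]
  intro he
  rw [eq_comm, Complex.exp_eq_one_iff] at he
  obtain ⟨t, ht⟩ := he
  apply h
  have h1 : (θ:ℂ) * I = ((2*Real.pi*t : ℝ) : ℂ) * I := by rw [ht]; push_cast; ring
  exact ⟨t, by exact_mod_cast mul_right_cancel₀ Complex.I_ne_zero h1⟩


lemma mul_vecMulVec' (M : Matrix (Fin n) (Fin n) ℂ) (x v : Fin n → ℂ) :
    M * vecMulVec x v = vecMulVec (M *ᵥ x) v := by
  ext i j; simp [mul_apply, vecMulVec_apply, mulVec, dotProduct, Finset.sum_mul, mul_assoc]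

lemma vecMulVec_mul' (M : Matrix (Fin n) (Fin n) ℂ) (x v : Fin n → ℂ) :
    vecMulVec x v * M = vecMulVec x (v ᵥ* M) := by
  ext i j; simp [mul_apply, vecMulVec_apply, vecMul, dotProduct, Finset.mul_sum, mul_assoc]

lemma vecMulVec_mulVec' (x v w : Fin n → ℂ) :
    vecMulVec x v *ᵥ w = (v ⬝ᵥ w) • x := by
  ext i
  simp only [mulVec, dotProduct, vecMulVec_apply, Pi.smul_apply, smul_eq_mul, Finset.sum_mul]
  exact Finset.sum_congr rfl fun j _ => by ring

lemma vecMul_vecMulVec' (x v w : Fin n → ℂ) :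
    w ᵥ* vecMulVec x v = (w ⬝ᵥ x) • v := by
  ext j
  simp only [vecMul, dotProduct, vecMulVec_apply, Pi.smul_apply, smul_eq_mul, Finset.sum_mul]
  exact Finset.sum_congr rfl fun i _ => by ring

lemma pseudoRot_mulVec (θ : ℝ) (x v : Fin n → ℂ) :
    pseudoRot θ x *ᵥ v = v - ((1 - Complex.exp (θ * Complex.I)) * (star x ⬝ᵥ v)) • x := by
  rw [pseudoRot, sub_mulVec, one_mulVec, smul_mulVec, vecMulVec_mulVec', smul_smul]

lemma vecMul_smulMat (c : ℂ) (M : Matrix (Fin n) (Fin n) ℂ) (v : Fin n → ℂ) :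
    v ᵥ* (c • M) = c • (v ᵥ* M) := by
  ext j
  simp only [vecMul, dotProduct, Matrix.smul_apply, Pi.smul_apply, smul_eq_mul, Finset.mul_sum]
  exact Finset.sum_congr rfl fun i _ => by ring

lemma pseudoRot_vecMul (θ : ℝ) (x v : Fin n → ℂ) :
    v ᵥ* pseudoRot θ x = v - ((1 - Complex.exp (θ * Complex.I)) * (v ⬝ᵥ x)) • star x := by
  rw [pseudoRot, vecMul_sub, vecMul_one, vecMul_smulMat, vecMul_vecMulVec', smul_smul]

lemma pseudoRot_mulVec_single {θ : ℝ} {x : Fin n → ℂ} {t : Fin n} (h : x t = 0) :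
    pseudoRot θ x *ᵥ Pi.single t 1 = Pi.single t 1 := by
  rw [pseudoRot_mulVec]
  have h1 : star x ⬝ᵥ Pi.single t 1 = 0 := by
    rw [dotProduct_single]
    simp [h]
  rw [h1, mul_zero, zero_smul, sub_zero]

lemma pseudoRot_single_vecMul {θ : ℝ} {x : Fin n → ℂ} {t : Fin n} (h : x t = 0) :
    Pi.single t 1 ᵥ* pseudoRot θ x = Pi.single t 1 := by
  rw [pseudoRot_vecMul]
  have h1 : Pi.single t 1 ⬝ᵥ x = 0 := by
    rw [single_dotProduct]
    simp [h]
  rw [h1, mul_zero, zero_smul, sub_zero]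

lemma prod_mulVec_fix (L : List (Matrix (Fin n) (Fin n) ℂ)) (v : Fin n → ℂ)
    (h : ∀ M ∈ L, M *ᵥ v = v) : L.prod *ᵥ v = v := by
  induction L with
  | nil => simp
  | cons M L ih =>
      rw [List.prod_cons, ← mulVec_mulVec, ih (fun N hN => h N (List.mem_cons_of_mem _ hN)),
        h M List.mem_cons_self]

lemma prod_vecMul_fix (L : List (Matrix (Fin n) (Fin n) ℂ)) (v : Fin n → ℂ)
    (h : ∀ M ∈ L, v ᵥ* M = v) : v ᵥ* L.prod = v := by
  induction L with
  | nil => simp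
  | cons M L ih =>
      rw [List.prod_cons, ← vecMul_vecMul, h M List.mem_cons_self,
        ih (fun N hN => h N (List.mem_cons_of_mem _ hN))]

lemma Pprod_fix_col {θ : ℕ → ℝ} {x : ℕ → Fin n → ℂ} {k : ℕ} {t : Fin n}
    (h : ∀ i < k, x i t = 0) :
    Pprod (fun i => pseudoRot (θ i) (x i)) k *ᵥ Pi.single t 1 = Pi.single t 1 := by
  apply prod_mulVec_fix
  intro M hM
  rw [List.mem_ofFn] at hM
  obtain ⟨i, rfl⟩ := hM
  exact pseudoRot_mulVec_single (h i i.isLt)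

lemma Pprod_fix_row {θ : ℕ → ℝ} {x : ℕ → Fin n → ℂ} {k : ℕ} {t : Fin n}
    (h : ∀ i < k, x i t = 0) :
    Pi.single t 1 ᵥ* Pprod (fun i => pseudoRot (θ i) (x i)) k = Pi.single t 1 := by
  apply prod_vecMul_fix
  intro M hM
  rw [List.mem_ofFn] at hM
  obtain ⟨i, rfl⟩ := hM
  exact pseudoRot_single_vecMul (h i i.isLt)

lemma Rprod_fix_col {θ : ℕ → ℝ} {x : ℕ → Fin n → ℂ} {k : ℕ} {t : Fin n}
    (h : ∀ i < k, x i t = 0) :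
    Rprod (fun i => pseudoRot (θ i) (x i)) k *ᵥ Pi.single t 1 = Pi.single t 1 := by
  apply prod_mulVec_fix
  intro M hM
  rw [List.mem_ofFn] at hM
  obtain ⟨i, rfl⟩ := hM
  exact pseudoRot_mulVec_single (h (k - 1 - (i:ℕ)) (by have := i.isLt; omega))

lemma Rprod_fix_row {θ : ℕ → ℝ} {x : ℕ → Fin n → ℂ} {k : ℕ} {t : Fin n}
    (h : ∀ i < k, x i t = 0) :
    Pi.single t 1 ᵥ* Rprod (fun i => pseudoRot (θ i) (x i)) k = Pi.single t 1 := by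
  apply prod_vecMul_fix
  intro M hM
  rw [List.mem_ofFn] at hM
  obtain ⟨i, rfl⟩ := hM
  exact pseudoRot_single_vecMul (h (k - 1 - (i:ℕ)) (by have := i.isLt; omega))

lemma Rprod_succ_col_entry_ne {θ : ℕ → ℝ} {y : ℕ → Fin n → ℂ} {k : ℕ} {t : Fin n}
    (h : ∀ j < k, y j t = 0) (hyt : y k t ≠ 0)
    (hc : (1:ℂ) - Complex.exp (θ k * Complex.I) ≠ 0) :
    (Rprod (fun j => pseudoRot (θ j) (y j)) (k+1) *ᵥ Pi.single t 1) t ≠ 1 := by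
  rw [Rprod_succ, ← mulVec_mulVec, Rprod_fix_col h, pseudoRot_mulVec]
  simp only [Pi.sub_apply, Pi.smul_apply, dotProduct_single, Pi.single_eq_same,
    smul_eq_mul, Pi.star_apply, mul_one]
  intro hcon
  have h2 : (1 - Complex.exp (θ k * Complex.I)) * star (y k t) * y k t = 0 := by
    linear_combination -hcon
  rcases mul_eq_zero.mp h2 with h3 | h3
  · rcases mul_eq_zero.mp h3 with h4 | h4
    · exact hc h4
    · exact hyt (by simpa using congrArg star h4)
  · exact hyt h3

lemma Pprod_succ_row_entry_ne {θ : ℕ → ℝ} {x : ℕ → Fin n → ℂ} {k : ℕ} {t : Fin n}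
    (h : ∀ i < k, x i t = 0) (hxt : x k t ≠ 0)
    (hc : (1:ℂ) - Complex.exp (θ k * Complex.I) ≠ 0) :
    (Pi.single t 1 ᵥ* Pprod (fun i => pseudoRot (θ i) (x i)) (k+1)) t ≠ 1 := by
  rw [Pprod_succ, ← vecMul_vecMul, Pprod_fix_row h, pseudoRot_vecMul]
  simp only [Pi.sub_apply, Pi.smul_apply, single_dotProduct, Pi.single_eq_same,
    smul_eq_mul, Pi.star_apply, one_mul]
  intro hcon
  have h2 : (1 - Complex.exp (θ k * Complex.I)) * x k t * star (x k t) = 0 := by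
    linear_combination -hcon
  rcases mul_eq_zero.mp h2 with h3 | h3
  · rcases mul_eq_zero.mp h3 with h4 | h4
    · exact hc h4
    · exact hxt h4
  · exact hxt (by simpa using congrArg star h3)

lemma vecMul_apply' (v : Fin n → ℂ) (M : Matrix (Fin n) (Fin n) ℂ) (s : Fin n) :
    (v ᵥ* M) s = v ⬝ᵥ (M *ᵥ Pi.single s 1) := by
  rw [mulVec_single]
  simp only [MulOpposite.op_one, one_smul]
  rfl

lemma vecMulVec_smul_left (a : ℂ) (x v : Fin n → ℂ) :
    vecMulVec (a • x) v = a • vecMulVec x v := by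
  ext i j; simp [vecMulVec_apply, mul_assoc]

lemma vecMulVec_smul_right (a : ℂ) (x v : Fin n → ℂ) :
    vecMulVec x (a • v) = a • vecMulVec x v := by
  ext i j; simp [vecMulVec_apply]; ring

lemma peel {Q R : Matrix (Fin n) (Fin n) ℂ} {c c' : ℂ} {x y : Fin n → ℂ} {s : Fin n}
    (hc : c ≠ 0) (hc' : c' ≠ 0) (hxs : x s ≠ 0) (hys : y s ≠ 0)
    (hQc : Q *ᵥ Pi.single s 1 = Pi.single s 1) (hQr : Pi.single s 1 ᵥ* Q = Pi.single s 1)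
    (hRc : R *ᵥ Pi.single s 1 = Pi.single s 1) (hRr : Pi.single s 1 ᵥ* R = Pi.single s 1)
    (heq : Q * (1 - c • vecMulVec x (star x)) = (1 - c' • vecMulVec y (star y)) * R) :
    Q = R := by
  have e1 : Q * (1 - c • vecMulVec x (star x)) = Q - c • vecMulVec (Q *ᵥ x) (star x) := by
    rw [mul_sub, mul_one, Matrix.mul_smul, mul_vecMulVec']
  have e2 : (1 - c' • vecMulVec y (star y)) * R = R - c' • vecMulVec y (star y ᵥ* R) := by
    rw [sub_mul, one_mul, Matrix.smul_mul, vecMulVec_mul']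
  rw [e1, e2] at heq
  have hD : Q - R = c • vecMulVec (Q *ᵥ x) (star x) - c' • vecMulVec y (star y ᵥ* R) :=
    sub_eq_sub_iff_sub_eq_sub.mp heq
  -- column evaluation at s
  have hcol0 : (Q - R) *ᵥ Pi.single s 1 = 0 := by rw [sub_mulVec, hQc, hRc, sub_self]
  have hyRs : (star y ᵥ* R) s = star (y s) := by
    rw [vecMul_apply', hRc, dotProduct_single, mul_one, Pi.star_apply]
  have hQxs : (Q *ᵥ x) s = x s := by
    have hq : (fun j => Q s j) = Pi.single s 1 := by
      have := single_one_vecMul s Q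
      rw [hQr] at this
      funext j
      exact (congrFun this j).symm
    show (fun j => Q s j) ⬝ᵥ x = x s
    rw [hq, single_dotProduct, one_mul]
  have hcol : (c * star (x s)) • (Q *ᵥ x) = (c' * star (y s)) • y := by
    have h1 : (c • vecMulVec (Q *ᵥ x) (star x) - c' • vecMulVec y (star y ᵥ* R)) *ᵥ
        Pi.single s 1 = 0 := by rw [← hD]; exact hcol0
    rw [sub_mulVec, smul_mulVec, smul_mulVec, vecMulVec_mulVec',
      vecMulVec_mulVec', dotProduct_single, dotProduct_single, mul_one, mul_one,
      Pi.star_apply, hyRs, sub_eq_zero] at h1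
    rw [smul_smul, smul_smul] at h1
    exact h1
  have hrow : (c * x s) • star x = (c' * y s) • (star y ᵥ* R) := by
    have h1 : Pi.single s 1 ᵥ* (c • vecMulVec (Q *ᵥ x) (star x)
        - c' • vecMulVec y (star y ᵥ* R)) = 0 := by
      rw [← hD, vecMul_sub, hQr, hRr, sub_self]
    rw [vecMul_sub, vecMul_smulMat, vecMul_smulMat, vecMul_vecMulVec', vecMul_vecMulVec',
      single_dotProduct, single_dotProduct, one_mul, one_mul, hQxs, sub_eq_zero] at h1
    rw [smul_smul, smul_smul] at h1
    exact h1
  -- solve for Q *ᵥ x and star y ᵥ* R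
  have hcs : c * star (x s) ≠ 0 := mul_ne_zero hc (star_ne_zero.mpr hxs)
  have hcy : c' * y s ≠ 0 := mul_ne_zero hc' hys
  have hQx : Q *ᵥ x = ((c * star (x s))⁻¹ * (c' * star (y s))) • y := by
    have h2 := congrArg (fun v : Fin n → ℂ => (c * star (x s))⁻¹ • v) hcol
    simp only [smul_smul] at h2
    rwa [inv_mul_cancel₀ hcs, one_smul] at h2
  have hyR : star y ᵥ* R = ((c' * y s)⁻¹ * (c * x s)) • star x := by
    have h2 := congrArg (fun v : Fin n → ℂ => (c' * y s)⁻¹ • v) hrow.symm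
    simp only [smul_smul] at h2
    rwa [inv_mul_cancel₀ hcy, one_smul] at h2
  have hD2 : Q - R = (c * ((c * star (x s))⁻¹ * (c' * star (y s)))
      - c' * ((c' * y s)⁻¹ * (c * x s))) • vecMulVec y (star x) := by
    rw [hD, hQx, hyR, vecMulVec_smul_left, vecMulVec_smul_right, smul_smul, smul_smul,
      sub_smul]
  have h1 : ((c * ((c * star (x s))⁻¹ * (c' * star (y s)))
      - c' * ((c' * y s)⁻¹ * (c * x s))) • vecMulVec y (star x)) *ᵥ Pi.single s 1 = 0 := by
    rw [← hD2]; exact hcol0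
  rw [smul_mulVec, vecMulVec_mulVec', dotProduct_single, mul_one, Pi.star_apply,
    smul_smul] at h1
  have h2 := congrFun h1 s
  simp only [Pi.smul_apply, smul_eq_mul, Pi.zero_apply] at h2
  have hab : c * ((c * star (x s))⁻¹ * (c' * star (y s)))
      - c' * ((c' * y s)⁻¹ * (c * x s)) = 0 := by
    rcases mul_eq_zero.mp h2 with h | h
    · rcases mul_eq_zero.mp h with h' | h'
      · exact h'
      · exact absurd h' (star_ne_zero.mpr hxs)
    · exact absurd h hys
  have hfin : Q - R = 0 := by rw [hD2, hab, zero_smul]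
  exact sub_eq_zero.mp hfin

lemma main (k : ℕ) : ∀ (k' : ℕ) (m m' : ℕ → ℕ) (θ θ' : ℕ → ℝ) (x y : ℕ → Fin n → ℂ),
    (∀ i < k, minBelongs (x i) (m i)) → (∀ j < k', minBelongs (y j) (m' j)) →
    (∀ i j, i < j → j < k → m i < m j) → (∀ i j, i < j → j < k' → m' i < m' j) →
    (∀ i < k, (1:ℂ) - Complex.exp (θ i * Complex.I) ≠ 0) →
    (∀ j < k', (1:ℂ) - Complex.exp (θ' j * Complex.I) ≠ 0) →
    Pprod (fun i => pseudoRot (θ i) (x i)) k = Rprod (fun j => pseudoRot (θ' j) (y j)) k' →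
    k = k' ∧ (∀ i < k, m i = m' i) ∧
      ∀ i ≤ k, Pprod (fun i' => pseudoRot (θ i') (x i')) i
        = Rprod (fun j => pseudoRot (θ' j) (y j)) i := by
  induction k with
  | zero =>
      intro k' m m' θ θ' x y hx hy hm hm' hθ hθ' heq
      match k' with
      | 0 =>
          refine ⟨rfl, fun i hi => absurd hi (by omega), fun i hi => ?_⟩
          have : i = 0 := by omega
          subst this
          rfl
      | Nat.succ k'' =>
          exfalso
          obtain ⟨hyvan, t, ht1, ht2⟩ := hy k'' (Nat.lt_succ_self k'')
          have hylow : ∀ j < k'', y j t = 0 := fun j hj =>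
            (hy j (by omega)).1 t (by have := hm' j k'' hj (Nat.lt_succ_self _); omega)
          have hne1 := Rprod_succ_col_entry_ne hylow ht2 (hθ' k'' (Nat.lt_succ_self _))
          rw [← heq] at hne1
          rw [show Pprod (fun i => pseudoRot (θ i) (x i)) 0 = 1 from rfl, one_mulVec] at hne1
          exact hne1 (Pi.single_eq_same t 1)
  | succ k ih =>
      intro k' m m' θ θ' x y hx hy hm hm' hθ hθ' heq
      obtain ⟨hxvan, s, hs1, hs2⟩ := hx k (Nat.lt_succ_self k)
      have hxlow : ∀ i < k, x i s = 0 := fun i hi =>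
        (hx i (by omega)).1 s (by have := hm i k hi (Nat.lt_succ_self _); omega)
      match k' with
      | 0 =>
          exfalso
          have hne1 := Pprod_succ_row_entry_ne hxlow hs2 (hθ k (Nat.lt_succ_self _))
          rw [heq] at hne1
          rw [show Rprod (fun j => pseudoRot (θ' j) (y j)) 0 = 1 from rfl, vecMul_one] at hne1
          exact hne1 (Pi.single_eq_same s 1)
      | Nat.succ k'' =>
          obtain ⟨hyvan, t, ht1, ht2⟩ := hy k'' (Nat.lt_succ_self k'')
          have hylow : ∀ j < k'', y j t = 0 := fun j hj =>
            (hy j (by omega)).1 t (by have := hm' j k'' hj (Nat.lt_succ_self _); omega)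
          -- the two top levels agree
          have hmm : m k = m' k'' := by
            by_contra hne
            rcases Nat.lt_or_ge (m k) (m' k'') with hlt | hge
            · have hall : ∀ i < k+1, x i t = 0 := by
                intro i hi
                have hmik : m i ≤ m k := by
                  rcases Nat.lt_or_ge i k with h | h
                  · exact le_of_lt (hm i k h (Nat.lt_succ_self _))
                  · have : i = k := by omega
                    subst this; exact le_refl _
                exact (hx i hi).1 t (by omega)
              have hne1 := Rprod_succ_col_entry_ne hylow ht2 (hθ' k'' (Nat.lt_succ_self _))
              rw [← heq, Pprod_fix_col hall] at hne1
              exact hne1 (Pi.single_eq_same t 1)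
            · have hlt : m' k'' < m k := by omega
              have hall : ∀ j < k''+1, y j s = 0 := by
                intro j hj
                have hmjk : m' j ≤ m' k'' := by
                  rcases Nat.lt_or_ge j k'' with h | h
                  · exact le_of_lt (hm' j k'' h (Nat.lt_succ_self _))
                  · have : j = k'' := by omega
                    subst this; exact le_refl _
                exact (hy j hj).1 s (by omega)
              have hne1 := Pprod_succ_row_entry_ne hxlow hs2 (hθ k (Nat.lt_succ_self _))
              rw [heq, Rprod_fix_row hall] at hne1
              exact hne1 (Pi.single_eq_same s 1)
          have hst : t = s := Fin.ext (by omega)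
          subst hst
          -- peel off the top pseudo-rotation
          have heq2 : Pprod (fun i => pseudoRot (θ i) (x i)) k * pseudoRot (θ k) (x k)
              = pseudoRot (θ' k'') (y k'') * Rprod (fun j => pseudoRot (θ' j) (y j)) k'' := by
            have h := heq
            rw [Pprod_succ, Rprod_succ] at h
            exact h
          have hQR : Pprod (fun i => pseudoRot (θ i) (x i)) k
              = Rprod (fun j => pseudoRot (θ' j) (y j)) k'' := by
            refine peel (hθ k (Nat.lt_succ_self _)) (hθ' k'' (Nat.lt_succ_self _)) hs2 ht2
              (Pprod_fix_col hxlow) (Pprod_fix_row hxlow)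
              (Rprod_fix_col hylow) (Rprod_fix_row hylow) ?_
            simp only [pseudoRot] at heq2
            exact heq2
          obtain ⟨hk, hmi, hprods⟩ := ih k'' m m' θ θ' x y
            (fun i hi => hx i (by omega)) (fun j hj => hy j (by omega))
            (fun i j hij hj => hm i j hij (by omega))
            (fun i j hij hj => hm' i j hij (by omega))
            (fun i hi => hθ i (by omega)) (fun j hj => hθ' j (by omega)) hQR
          refine ⟨by omega, ?_, ?_⟩
          · intro i hi
            rcases Nat.lt_or_ge i k with h | h
            · exact hmi i h
            · have : i = k := by omega
              subst this
              rw [hmm, hk]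
          · intro i hi
            rcases Nat.lt_or_ge i (k+1) with h | h
            · exact hprods i (by omega)
            · have : i = k + 1 := by omega
              subst this
              rw [← hk] at heq
              exact heq

lemma one_sub_smul_mul (V : Matrix (Fin n) (Fin n) ℂ) (hVV : V * V = V) (c d : ℂ)
    (hcd : c + d - d * c = 0) : (1 - c • V) * (1 - d • V) = 1 := by
  have expand : (1 - c • V) * (1 - d • V) = 1 - c • V - d • V + (d * c) • (V * V) := by
    simp only [sub_mul, mul_sub, one_mul, mul_one, Matrix.smul_mul, Matrix.mul_smul, smul_smul]
    abel
  rw [expand, hVV]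
  have h2 : (1 : Matrix (Fin n) (Fin n) ℂ) - c • V - d • V + (d * c) • V
      = 1 - (c + d - d * c) • V := by
    rw [sub_smul, add_smul]
    abel
  rw [h2, hcd, zero_smul, sub_zero]

lemma pseudoRot_mul_neg (θ : ℝ) (x : Fin n → ℂ) (hx : star x ⬝ᵥ x = 1) :
    pseudoRot θ x * pseudoRot (-θ) x = 1 := by
  have hVV : vecMulVec x (star x) * vecMulVec x (star x) = vecMulVec x (star x) := by
    rw [vecMulVec_mul', vecMul_vecMulVec', hx, one_smul]
  have hee : Complex.exp (θ * Complex.I) * Complex.exp ((-θ : ℝ) * Complex.I) = 1 := by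
    rw [← Complex.exp_add, show ((θ:ℂ) * Complex.I + ((-θ:ℝ):ℂ) * Complex.I) = 0 by
      push_cast; ring, Complex.exp_zero]
  have hcd : ((1:ℂ) - Complex.exp (θ * Complex.I)) + ((1:ℂ) - Complex.exp ((-θ:ℝ) * Complex.I))
      - ((1:ℂ) - Complex.exp ((-θ:ℝ) * Complex.I)) * ((1:ℂ) - Complex.exp (θ * Complex.I))
      = 0 := by
    linear_combination -hee
  exact one_sub_smul_mul _ hVV _ _ hcd

lemma pseudoRot_inv_eq (θ : ℝ) (x : Fin n → ℂ) (hx : star x ⬝ᵥ x = 1) :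
    (pseudoRot θ x)⁻¹ = pseudoRot (-θ) x :=
  Matrix.inv_eq_right_inv (pseudoRot_mul_neg θ x hx)

lemma pseudoRot_mul_inv (θ : ℝ) (x : Fin n → ℂ) (hx : star x ⬝ᵥ x = 1) :
    pseudoRot θ x * (pseudoRot θ x)⁻¹ = 1 := by
  rw [pseudoRot_inv_eq θ x hx]
  exact pseudoRot_mul_neg θ x hx

lemma pseudoRot_inv_mul (θ : ℝ) (x : Fin n → ℂ) (hx : star x ⬝ᵥ x = 1) :
    (pseudoRot θ x)⁻¹ * pseudoRot θ x = 1 := by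
  rw [pseudoRot_inv_eq θ x hx]
  have := pseudoRot_mul_neg (-θ) x hx
  rwa [neg_neg] at this

lemma Pprod_mul_Rprod (A C : ℕ → Matrix (Fin n) (Fin n) ℂ) (i : ℕ)
    (h : ∀ j < i, A j * C j = 1) : Pprod A i * Rprod C i = 1 := by
  induction i with
  | zero => simp
  | succ i ih =>
      rw [Pprod_succ, Rprod_succ, mul_assoc, ← mul_assoc (A i), h i (Nat.lt_succ_self i),
        one_mul, ih (fun j hj => h j (by omega))]

end Stmt8Aux

open Stmt8Aux

theorem stmt8 {n : ℕ} (k k' : ℕ)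
    (m m' : ℕ → ℕ) (θ θ' : ℕ → ℝ) (x y : ℕ → Fin n → ℂ)
    (hx : ∀ i < k, star (x i) ⬝ᵥ x i = 1 ∧ minBelongs (x i) (m i))
    (hy : ∀ j < k', star (y j) ⬝ᵥ y j = 1 ∧ minBelongs (y j) (m' j))
    (hm : ∀ i j, i < j → j < k → m i < m j)
    (hm' : ∀ i j, i < j → j < k' → m' i < m' j)
    (hθ : ∀ i < k, ¬ ∃ t : ℤ, θ i = 2 * Real.pi * t)
    (hθ' : ∀ j < k', ¬ ∃ t : ℤ, θ' j = 2 * Real.pi * t)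
    (heq : (List.ofFn fun i : Fin k => pseudoRot (θ i) (x i)).prod
         = (List.ofFn fun j : Fin k' =>
             pseudoRot (θ' (k' - 1 - (j : ℕ))) (y (k' - 1 - (j : ℕ)))).prod) :
    (k = k' ∧ ∀ i < k, m i = m' i) ∧
    (∀ i < k, pseudoRot (θ i) (x i) =
      (List.ofFn fun j : Fin i => (pseudoRot (θ' (j : ℕ)) (y (j : ℕ)))⁻¹).prod *
      pseudoRot (θ' i) (y i) *
      (List.ofFn fun j : Fin i =>
        pseudoRot (θ' (i - 1 - (j : ℕ))) (y (i - 1 - (j : ℕ)))).prod) ∧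
    (∀ i < k, pseudoRot (θ' i) (y i) =
      (List.ofFn fun j : Fin i => pseudoRot (θ (j : ℕ)) (x (j : ℕ))).prod *
      pseudoRot (θ i) (x i) *
      (List.ofFn fun j : Fin i =>
        (pseudoRot (θ (i - 1 - (j : ℕ))) (x (i - 1 - (j : ℕ))))⁻¹).prod) := by
  have hc : ∀ i < k, (1:ℂ) - Complex.exp (θ i * Complex.I) ≠ 0 :=
    fun i hi => exp_term_ne_zero (hθ i hi)
  have hc' : ∀ j < k', (1:ℂ) - Complex.exp (θ' j * Complex.I) ≠ 0 :=
    fun j hj => exp_term_ne_zero (hθ' j hj)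
  have heq' : Pprod (fun i => pseudoRot (θ i) (x i)) k
      = Rprod (fun j => pseudoRot (θ' j) (y j)) k' := heq
  obtain ⟨hk, hmeq, hprods⟩ := main k k' m m' θ θ' x y
    (fun i hi => (hx i hi).2) (fun j hj => (hy j hj).2) hm hm' hc hc' heq'
  refine ⟨⟨hk, hmeq⟩, ?_, ?_⟩
  · -- (b)
    intro i hi
    have h1 : Pprod (fun i' => pseudoRot (θ i') (x i')) i
        = Rprod (fun j => pseudoRot (θ' j) (y j)) i := hprods i (le_of_lt hi)
    have h2 : Pprod (fun i' => pseudoRot (θ i') (x i')) (i+1)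
        = Rprod (fun j => pseudoRot (θ' j) (y j)) (i+1) := hprods (i+1) (by omega)
    rw [Pprod_succ, Rprod_succ, h1] at h2
    -- h2 : Rprod B i * A i = B i * Rprod B i
    have hinvmul : Pprod (fun j => (pseudoRot (θ' j) (y j))⁻¹) i
        * Rprod (fun j => pseudoRot (θ' j) (y j)) i = 1 :=
      Pprod_mul_Rprod _ _ i (fun j hj =>
        pseudoRot_inv_mul (θ' j) (y j) (hy j (by omega)).1)
    show pseudoRot (θ i) (x i)
        = Pprod (fun j => (pseudoRot (θ' j) (y j))⁻¹) i * pseudoRot (θ' i) (y i)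
          * Rprod (fun j => pseudoRot (θ' j) (y j)) i
    rw [mul_assoc, ← h2, ← mul_assoc, hinvmul, one_mul]
  · -- (c)
    intro i hi
    have h1 : Pprod (fun i' => pseudoRot (θ i') (x i')) i
        = Rprod (fun j => pseudoRot (θ' j) (y j)) i := hprods i (le_of_lt hi)
    have h2 : Pprod (fun i' => pseudoRot (θ i') (x i')) (i+1)
        = Rprod (fun j => pseudoRot (θ' j) (y j)) (i+1) := hprods (i+1) (by omega)
    rw [Pprod_succ, Rprod_succ] at h2
    have hinvmul : Pprod (fun i' => pseudoRot (θ i') (x i')) i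
        * Rprod (fun i' => (pseudoRot (θ i') (x i'))⁻¹) i = 1 :=
      Pprod_mul_Rprod _ _ i (fun j hj =>
        pseudoRot_mul_inv (θ j) (x j) (hx j (by omega)).1)
    show pseudoRot (θ' i) (y i)
        = Pprod (fun i' => pseudoRot (θ i') (x i')) i * pseudoRot (θ i) (x i)
          * Rprod (fun i' => (pseudoRot (θ i') (x i'))⁻¹) i
    rw [h2, ← h1, mul_assoc, hinvmul, mul_one]
end

section
/- The ordered factorization of an element of SU_n into pseudo-rotations with strictly increasing minimal indices is unique: if B = A_{(θ_1,x_1)}⋯A_{(θ_k,x_k)} = A_{(θ'_1,x'_1)}⋯A_{(θ'_{k'},x'_{k'})}, where the x_j and x'_j are unit vectors with x_j ∈_min ℂ^{m_j}, x'_j ∈_min ℂ^{m'_j}, m_1 < m_2 < ⋯ < m_k, m'_1 < m'_2 < ⋯ < m'_{k'}, and all angles θ_j, θ'_j are not integer multiples of 2π, then k = k', and for each j one has m_j = m'_j, θ_j ≡ θ'_j (mod 2π), and x_j and x'_j span the same complex line. -/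
open Matrix Complex

namespace SAux

variable {n : ℕ}

lemma pr_apply (θ : ℝ) (x : Fin n → ℂ) (p i : Fin n) :
    pseudoRot θ x p i =
      (if p = i then (1:ℂ) else 0)
        - (1 - Complex.exp (θ * Complex.I)) * (x p * star (x i)) := by
  simp [pseudoRot, Matrix.sub_apply, Matrix.one_apply, Matrix.vecMulVec_apply, mul_assoc]

lemma one_sub_exp_ne {θ : ℝ} (h : ¬ ∃ t : ℤ, θ = 2 * Real.pi * t) :
    (1 : ℂ) - Complex.exp (θ * Complex.I) ≠ 0 := by
  intro hc
  have h1 : Complex.exp (θ * Complex.I) = 1 := by linear_combination -hc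
  rw [Complex.exp_eq_one_iff] at h1
  obtain ⟨t, ht⟩ := h1
  apply h
  refine ⟨t, ?_⟩
  have h2 : ((θ : ℂ)) * Complex.I = ((2 * Real.pi * t : ℝ) : ℂ) * Complex.I := by
    push_cast
    linear_combination ht
  have := mul_right_cancel₀ Complex.I_ne_zero h2
  exact_mod_cast this

lemma mul_row_id {M N : Matrix (Fin n) (Fin n) ℂ} {p : Fin n}
    (hM : ∀ i, M p i = if p = i then 1 else 0) (i : Fin n) :
    (M * N) p i = N p i := by
  rw [Matrix.mul_apply]
  simp only [hM, ite_mul, one_mul, zero_mul]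
  simp

lemma prod_row_id {p : Fin n} : ∀ (l : List (Matrix (Fin n) (Fin n) ℂ)),
    (∀ M ∈ l, ∀ i, M p i = if p = i then 1 else 0) → ∀ i : Fin n,
    l.prod p i = if p = i then 1 else 0 := by
  intro l
  induction l with
  | nil => intro h i; simp [Matrix.one_apply]
  | cons M t ih =>
    intro h i
    rw [List.prod_cons, mul_row_id (h M (by simp))]
    exact ih (fun M hM => h M (by simp [hM])) i

lemma prod_row_ge {k : ℕ} {θ : ℕ → ℝ} {x : ℕ → Fin n → ℂ} {q : Fin n}
    (h : ∀ j < k, x j q = 0) (i : Fin n) :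
    (List.ofFn fun j : Fin k => pseudoRot (θ j) (x j)).prod q i = if q = i then 1 else 0 := by
  apply prod_row_id
  intro M hM i
  rw [List.mem_ofFn] at hM
  obtain ⟨j, rfl⟩ := hM
  simp [pr_apply, h j j.isLt]

lemma prod_row_last {r : ℕ} {θ : ℕ → ℝ} {x : ℕ → Fin n → ℂ} {p : Fin n}
    (h : ∀ j < r, x j p = 0) (i : Fin n) :
    (List.ofFn fun j : Fin (r+1) => pseudoRot (θ j) (x j)).prod p i =
      (if p = i then (1:ℂ) else 0)
        - (1 - Complex.exp (θ r * Complex.I)) * (x r p * star (x r i)) := by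
  rw [List.ofFn_succ', List.concat_eq_append, List.prod_append, List.prod_cons,
    List.prod_nil, mul_one]
  rw [mul_row_id (fun i => prod_row_id _ ?_ i)]
  · rw [pr_apply]
    simp [Fin.val_last]
  · intro M hM i
    rw [List.mem_ofFn] at hM
    obtain ⟨j, rfl⟩ := hM
    simp [pr_apply, h (j : ℕ) j.isLt]

lemma prod_diag_ne_one {r : ℕ} {θ : ℕ → ℝ} {x : ℕ → Fin n → ℂ} {p : Fin n}
    (h : ∀ j < r, x j p = 0) (hc : (1 : ℂ) - Complex.exp (θ r * Complex.I) ≠ 0)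
    (hp : x r p ≠ 0) :
    (List.ofFn fun j : Fin (r+1) => pseudoRot (θ j) (x j)).prod p p ≠ 1 := by
  rw [prod_row_last h]
  intro heq
  have hpp : (if p = p then (1:ℂ) else 0) = 1 := by simp
  rw [hpp] at heq
  have : (1 - Complex.exp (θ r * Complex.I)) * (x r p * star (x r p)) = 0 := by
    linear_combination -heq
  rcases mul_eq_zero.1 this with h1 | h1
  · exact hc h1
  · rcases mul_eq_zero.1 h1 with h2 | h2
    · exact hp h2
    · exact hp (star_eq_zero.1 h2)

lemma pseudoRot_mul_inv {θ : ℝ} {x : Fin n → ℂ} (hx : star x ⬝ᵥ x = 1) :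
    pseudoRot θ x * pseudoRot (-θ) x = 1 := by
  set P : Matrix (Fin n) (Fin n) ℂ := Matrix.vecMulVec x (star x) with hP
  have hPP : P * P = P := by
    ext i j
    rw [Matrix.mul_apply]
    simp only [hP, Matrix.vecMulVec_apply]
    have : ∑ l, (x i * star x l) * (x l * star x j)
        = (x i * star x j) * ∑ l, star x l * x l := by
      rw [Finset.mul_sum]; congr 1; funext l; ring
    rw [this]
    have hx1 : ∑ l, star x l * x l = 1 := hx
    rw [hx1, mul_one]
  have key : Complex.exp (↑θ * Complex.I) * Complex.exp (↑(-θ) * Complex.I) = 1 := by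
    rw [← Complex.exp_add]
    push_cast
    ring_nf
    exact Complex.exp_zero
  set a : ℂ := 1 - Complex.exp (↑θ * Complex.I)
  set b : ℂ := 1 - Complex.exp (↑(-θ) * Complex.I)
  have hab : b + a - a * b = 0 := by
    simp only [a, b]
    linear_combination -key
  show (1 - a • P) * (1 - b • P) = 1
  have expand : (1 - a • P) * (1 - b • P)
      = 1 - b • P - a • P + (a * b) • P := by
    rw [one_sub_mul, mul_one_sub, smul_mul_assoc, mul_smul_comm, hPP, smul_smul]
    abel
  rw [expand, show (1 : Matrix (Fin n) (Fin n) ℂ) - b • P - a • P + (a * b) • P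
      = 1 - (b + a - a * b) • P by module, hab, zero_smul, sub_zero]

lemma no_lt {r r' : ℕ} {m m' : ℕ → ℕ} {θ θ' : ℕ → ℝ} {x x' : ℕ → Fin n → ℂ}
    (hx : ∀ j < r+1, star (x j) ⬝ᵥ x j = 1 ∧ minBelongs (x j) (m j))
    (hx' : ∀ j < r'+1, star (x' j) ⬝ᵥ x' j = 1 ∧ minBelongs (x' j) (m' j))
    (hm : ∀ i j, i < j → j < r+1 → m i < m j)
    (hm' : ∀ i j, i < j → j < r'+1 → m' i < m' j)
    (hθ' : ¬ ∃ t : ℤ, θ' r' = 2 * Real.pi * t)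
    (heq : (List.ofFn fun j : Fin (r+1) => pseudoRot (θ j) (x j)).prod
         = (List.ofFn fun j : Fin (r'+1) => pseudoRot (θ' j) (x' j)).prod)
    (hlt : m r < m' r') : False := by
  obtain ⟨p', hp'1, hp'ne⟩ := (hx' r' (Nat.lt_succ_self r')).2.2
  have hz : ∀ j < r+1, x j p' = 0 := by
    intro j hj
    apply (hx j hj).2.1 p'
    have hjr : m j ≤ m r := by
      rcases Nat.lt_or_ge j r with h | h
      · exact (hm j r h (Nat.lt_succ_self r)).le
      · have : j = r := by omega
        subst this; exact le_rfl
    omega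
  have hz' : ∀ j < r', x' j p' = 0 := by
    intro j hj
    apply (hx' j (by omega)).2.1 p'
    have := hm' j r' hj (Nat.lt_succ_self r')
    omega
  have h1 : (List.ofFn fun j : Fin (r+1) => pseudoRot (θ j) (x j)).prod p' p' = 1 := by
    rw [prod_row_ge hz]; simp
  exact prod_diag_ne_one hz' (one_sub_exp_ne hθ') hp'ne (by rw [← heq, h1])

lemma prod_ne_one {r' : ℕ} {m' : ℕ → ℕ} {θ' : ℕ → ℝ} {x' : ℕ → Fin n → ℂ}
    (hx' : ∀ j < r'+1, star (x' j) ⬝ᵥ x' j = 1 ∧ minBelongs (x' j) (m' j))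
    (hm' : ∀ i j, i < j → j < r'+1 → m' i < m' j)
    (hθ' : ¬ ∃ t : ℤ, θ' r' = 2 * Real.pi * t) :
    (List.ofFn fun j : Fin (r'+1) => pseudoRot (θ' j) (x' j)).prod ≠ 1 := by
  obtain ⟨p', hp'1, hp'ne⟩ := (hx' r' (Nat.lt_succ_self r')).2.2
  have hz' : ∀ j < r', x' j p' = 0 := by
    intro j hj
    apply (hx' j (by omega)).2.1 p'
    have := hm' j r' hj (Nat.lt_succ_self r')
    omega
  intro h
  exact prod_diag_ne_one hz' (one_sub_exp_ne hθ') hp'ne (by rw [h, Matrix.one_apply_eq])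

theorem key (m m' : ℕ → ℕ) (θ θ' : ℕ → ℝ) (x x' : ℕ → Fin n → ℂ) :
    ∀ (k k' : ℕ) (B : Matrix (Fin n) (Fin n) ℂ),
    (∀ j < k, star (x j) ⬝ᵥ x j = 1 ∧ minBelongs (x j) (m j)) →
    (∀ j < k', star (x' j) ⬝ᵥ x' j = 1 ∧ minBelongs (x' j) (m' j)) →
    (∀ i j, i < j → j < k → m i < m j) →
    (∀ i j, i < j → j < k' → m' i < m' j) →
    (∀ j < k, ¬ ∃ t : ℤ, θ j = 2 * Real.pi * t) →
    (∀ j < k', ¬ ∃ t : ℤ, θ' j = 2 * Real.pi * t) →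
    B = (List.ofFn fun j : Fin k => pseudoRot (θ j) (x j)).prod →
    B = (List.ofFn fun j : Fin k' => pseudoRot (θ' j) (x' j)).prod →
    k = k' ∧ ∀ j < k, m j = m' j ∧ (∃ t : ℤ, θ j - θ' j = 2 * Real.pi * t) ∧
      Submodule.span ℂ {x j} = Submodule.span ℂ {x' j} := by
  intro k
  induction k with
  | zero =>
    intro k' B hx hx' hm hm' hθ hθ' hB hB'
    refine ⟨?_, fun j hj => absurd hj (Nat.not_lt_zero j)⟩
    by_contra hk'
    obtain ⟨r', rfl⟩ : ∃ r', k' = r' + 1 := ⟨k' - 1, by omega⟩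
    have hB1 : B = 1 := by rw [hB]; simp
    exact prod_ne_one hx' hm' (hθ' r' (Nat.lt_succ_self r')) (by rw [← hB', hB1])
  | succ r ih =>
    intro k' B hx hx' hm hm' hθ hθ' hB hB'
    obtain ⟨r', rfl⟩ : ∃ r', k' = r' + 1 := by
      refine ⟨k' - 1, ?_⟩
      rcases Nat.eq_zero_or_pos k' with h0 | h0
      · exfalso
        subst h0
        have hB1 : B = 1 := by rw [hB']; simp
        exact prod_ne_one hx hm (hθ r (Nat.lt_succ_self r)) (by rw [← hB, hB1])
      · omega
    have heqBB : (List.ofFn fun j : Fin (r+1) => pseudoRot (θ j) (x j)).prod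
        = (List.ofFn fun j : Fin (r'+1) => pseudoRot (θ' j) (x' j)).prod := by
      rw [← hB, ← hB']
    -- last minimal indices agree
    have hmm : m r = m' r' := by
      rcases lt_trichotomy (m r) (m' r') with h | h | h
      · exact absurd h (fun h => no_lt hx hx' hm hm' (hθ' r' (Nat.lt_succ_self r')) heqBB h)
      · exact h
      · exact absurd h (fun h => no_lt hx' hx hm' hm (hθ r (Nat.lt_succ_self r)) heqBB.symm h)
    obtain ⟨p, hp1, hpne⟩ := (hx r (Nat.lt_succ_self r)).2.2
    obtain ⟨p', hp'1, hp'ne0⟩ := (hx' r' (Nat.lt_succ_self r')).2.2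
    have hpp' : p' = p := Fin.ext (by omega)
    have hp'ne : x' r' p ≠ 0 := hpp' ▸ hp'ne0
    have hz1 : ∀ j < r, x j p = 0 := by
      intro j hj
      apply (hx j (by omega)).2.1 p
      have := hm j r hj (Nat.lt_succ_self r); omega
    have hz1' : ∀ j < r', x' j p = 0 := by
      intro j hj
      apply (hx' j (by omega)).2.1 p
      have := hm' j r' hj (Nat.lt_succ_self r'); omega
    set c : ℂ := 1 - Complex.exp (θ r * Complex.I) with hcdef
    set c' : ℂ := 1 - Complex.exp (θ' r' * Complex.I) with hc'def
    have hc0 : c ≠ 0 := one_sub_exp_ne (hθ r (Nat.lt_succ_self r))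
    have hc'0 : c' ≠ 0 := one_sub_exp_ne (hθ' r' (Nat.lt_succ_self r'))
    have hrow : ∀ i, c * (x r p * star (x r i)) = c' * (x' r' p * star (x' r' i)) := by
      intro i
      have e1 := prod_row_last (θ := θ) (x := x) hz1 i
      have e2 := prod_row_last (θ := θ') (x := x') hz1' i
      rw [heqBB, e2] at e1
      linear_combination e1
    set a : ℂ := c * x r p with hadef
    set a' : ℂ := c' * x' r' p with ha'def
    have ha0 : a ≠ 0 := mul_ne_zero hc0 hpne
    have ha'0 : a' ≠ 0 := mul_ne_zero hc'0 hp'ne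
    have h1 : ∀ i, a * star (x r i) = a' * star (x' r' i) := by
      intro i
      rw [hadef, ha'def]
      linear_combination hrow i
    set μ : ℂ := star (a / a') with hμdef
    have hμ0 : μ ≠ 0 := star_ne_zero.2 (div_ne_zero ha0 ha'0)
    have hμ : ∀ i, x' r' i = μ * x r i := by
      intro i
      have h2 : star (x' r' i) = (a / a') * star (x r i) := by
        rw [div_mul_eq_mul_div, eq_div_iff ha'0]
        linear_combination -(h1 i)
      calc x' r' i = star (star (x' r' i)) := (star_star _).symm
        _ = star ((a / a') * star (x r i)) := by rw [h2]
        _ = μ * x r i := by rw [star_mul', star_star, hμdef]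
    have hu : star (x r) ⬝ᵥ x r = 1 := (hx r (Nat.lt_succ_self r)).1
    have hu' : star (x' r') ⬝ᵥ x' r' = 1 := (hx' r' (Nat.lt_succ_self r')).1
    have hnorm : star μ * μ = 1 := by
      have e : star (x' r') ⬝ᵥ x' r' = (star μ * μ) * (star (x r) ⬝ᵥ x r) := by
        simp only [dotProduct, Pi.star_apply, hμ, star_mul', Finset.mul_sum]
        exact Finset.sum_congr rfl (fun i _ => by ring)
      rw [hu, hu', mul_one] at e
      exact e.symm
    have hcc' : c = c' := by
      have e1 : a * star (x r p) = (a' * star μ) * star (x r p) := by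
        have := h1 p
        rw [hμ p, star_mul'] at this
        linear_combination this
      have e2 : a = a' * star μ := mul_right_cancel₀ (star_ne_zero.2 hpne) e1
      have e3 : c * x r p = c' * x r p := by
        calc c * x r p = a := rfl
          _ = a' * star μ := e2
          _ = c' * x r p := by
              rw [ha'def, hμ p]
              linear_combination c' * x r p * hnorm
      exact mul_right_cancel₀ hpne e3
    have hexp : Complex.exp (θ r * Complex.I) = Complex.exp (θ' r' * Complex.I) := by
      rw [hcdef, hc'def] at hcc'
      linear_combination -hcc'
    have hθeq : ∃ t : ℤ, θ r - θ' r' = 2 * Real.pi * t := by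
      rw [Complex.exp_eq_exp_iff_exists_int] at hexp
      obtain ⟨t, ht⟩ := hexp
      refine ⟨t, ?_⟩
      have h2 : ((θ r - θ' r' : ℝ) : ℂ) * Complex.I
          = ((2 * Real.pi * t : ℝ) : ℂ) * Complex.I := by
        push_cast
        linear_combination ht
      exact_mod_cast mul_right_cancel₀ Complex.I_ne_zero h2
    have hxx : x' r' = μ • x r := funext fun i => by rw [hμ i]; rfl
    have hspan : Submodule.span ℂ {x r} = Submodule.span ℂ {x' r'} := by
      rw [hxx]
      exact (Submodule.span_singleton_smul_eq (IsUnit.mk0 μ hμ0) (x r)).symm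
    have hexp' : Complex.exp (θ r * Complex.I) = Complex.exp (θ' r' * Complex.I) := by
      rw [Complex.exp_eq_exp_iff_exists_int]
      obtain ⟨t, ht⟩ := hθeq
      refine ⟨t, ?_⟩
      push_cast
      have : ((θ r : ℂ)) - (θ' r' : ℂ) = 2 * Real.pi * t := by exact_mod_cast ht
      linear_combination Complex.I * this
    have hA : pseudoRot (θ r) (x r) = pseudoRot (θ' r') (x' r') := by
      have hv : Matrix.vecMulVec (x' r') (star (x' r')) = Matrix.vecMulVec (x r) (star (x r)) := by
        ext i j
        simp only [Matrix.vecMulVec_apply, Pi.star_apply, hμ, star_mul']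
        linear_combination x r i * star (x r j) * hnorm
      unfold pseudoRot
      rw [hv, hexp']
    -- split off last factors
    have hBsplit : B = (List.ofFn fun j : Fin r => pseudoRot (θ j) (x j)).prod
        * pseudoRot (θ r) (x r) := by
      rw [hB, List.ofFn_succ', List.concat_eq_append, List.prod_append, List.prod_cons,
        List.prod_nil, mul_one]
      rfl
    have hB'split : B = (List.ofFn fun j : Fin r' => pseudoRot (θ' j) (x' j)).prod
        * pseudoRot (θ r) (x r) := by
      rw [hA]
      rw [hB', List.ofFn_succ', List.concat_eq_append, List.prod_append, List.prod_cons,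
        List.prod_nil, mul_one]
      rfl
    have hpre : (List.ofFn fun j : Fin r => pseudoRot (θ j) (x j)).prod
        = B * pseudoRot (-(θ r)) (x r) := by
      rw [hBsplit, mul_assoc, pseudoRot_mul_inv hu, mul_one]
    have hpre' : (List.ofFn fun j : Fin r' => pseudoRot (θ' j) (x' j)).prod
        = B * pseudoRot (-(θ r)) (x r) := by
      rw [hB'split, mul_assoc, pseudoRot_mul_inv hu, mul_one]
    obtain ⟨hrr', hall⟩ := ih r' (B * pseudoRot (-(θ r)) (x r))
      (fun j hj => hx j (by omega)) (fun j hj => hx' j (by omega))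
      (fun i j h1 h2 => hm i j h1 (by omega)) (fun i j h1 h2 => hm' i j h1 (by omega))
      (fun j hj => hθ j (by omega)) (fun j hj => hθ' j (by omega))
      hpre.symm hpre'.symm
    refine ⟨by omega, ?_⟩
    intro j hj
    rcases Nat.lt_or_ge j r with hjr | hjr
    · exact hall j hjr
    · have hjr2 : j = r := by omega
      subst hjr2
      have hr'r : r' = j := hrr'.symm
      subst hr'r
      exact ⟨hmm, hθeq, hspan⟩

end SAux

theorem stmt10 {n : ℕ} (B : Matrix (Fin n) (Fin n) ℂ)
    (hU : B ∈ Matrix.unitaryGroup (Fin n) ℂ) (hdet : B.det = 1)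
    (k k' : ℕ) (m m' : ℕ → ℕ) (θ θ' : ℕ → ℝ) (x x' : ℕ → Fin n → ℂ)
    (hx : ∀ j < k, star (x j) ⬝ᵥ x j = 1 ∧ minBelongs (x j) (m j))
    (hx' : ∀ j < k', star (x' j) ⬝ᵥ x' j = 1 ∧ minBelongs (x' j) (m' j))
    (hm : ∀ i j, i < j → j < k → m i < m j)
    (hm' : ∀ i j, i < j → j < k' → m' i < m' j)
    (hθ : ∀ j < k, ¬ ∃ t : ℤ, θ j = 2 * Real.pi * t)
    (hθ' : ∀ j < k', ¬ ∃ t : ℤ, θ' j = 2 * Real.pi * t)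
    (hB : B = (List.ofFn fun j : Fin k => pseudoRot (θ j) (x j)).prod)
    (hB' : B = (List.ofFn fun j : Fin k' => pseudoRot (θ' j) (x' j)).prod) :
    k = k' ∧ ∀ j < k, m j = m' j ∧ (∃ t : ℤ, θ j - θ' j = 2 * Real.pi * t) ∧
      Submodule.span ℂ {x j} = Submodule.span ℂ {x' j} := by
  exact SAux.key m m' θ θ' x x' k k' B hx hx' hm hm' hθ hθ' hB hB'
end

section
/- For every θ ∈ ℝ and every unit vector x ∈ ℂ^{2n}: the vector 𝐣x is a unit vector orthogonal to x; the pseudo-rotations A_{(θ,x)} and A_{(θ,𝐣x)} commute; their product M = A_{(θ,x)}·A_{(θ,𝐣x)} (the ℍ-pseudo-rotation about the quaternionic line spanned by x) has determinant e^{2iθ}; and M is ℍ*-linear, i.e. M(𝐣y) = 𝐣(M*y) for every y ∈ ℂ^{2n}, where M* is the conjugate transpose of M. -/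
open Matrix Complex

/-- The `2n × 2n` block-diagonal matrix with `2 × 2` diagonal blocks `[[0,1],[-1,0]]`. -/
def Jmat (n : ℕ) : Matrix (Fin (2 * n)) (Fin (2 * n)) ℂ :=
  Matrix.of fun i j =>
    if (i : ℕ) % 2 = 0 ∧ (j : ℕ) = (i : ℕ) + 1 then 1
    else if (j : ℕ) % 2 = 0 ∧ (i : ℕ) = (j : ℕ) + 1 then -1 else 0

/-- The quaternionic structure map `𝐣x := J_n · x̄` on `ℂ^{2n}`. -/
noncomputable def jmap {n : ℕ} (x : Fin (2 * n) → ℂ) : Fin (2 * n) → ℂ :=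
  Jmat n *ᵥ star x

section JL
variable (n : ℕ)

lemma myJ_transpose : (Jmat n)ᵀ = -(Jmat n) := by
  ext i j
  simp only [transpose_apply, Matrix.neg_apply, Jmat, of_apply]
  split_ifs <;> first | (exfalso; omega) | norm_num

lemma myJ_mul_J : Jmat n * Jmat n = -1 := by
  ext i k
  rw [Matrix.mul_apply]
  have hi2 : (i:ℕ) < 2*n := i.isLt
  by_cases hi : (i:ℕ) % 2 = 0
  · have h1 : (i:ℕ)+1 < 2*n := by omega
    rw [Finset.sum_eq_single (⟨(i:ℕ)+1, h1⟩ : Fin (2*n))]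
    · simp only [Jmat, of_apply, Fin.val_mk, and_true, Matrix.neg_apply, Matrix.one_apply,
        Fin.ext_iff]
      split_ifs <;> first | (exfalso; omega) | norm_num
    · intro b _ hb
      rw [Ne, Fin.ext_iff] at hb
      simp only [Fin.val_mk, and_true] at hb
      simp only [Jmat, of_apply, Fin.val_mk, and_true]
      split_ifs <;> first | (exfalso; omega) | norm_num
    · simp
  · have h1 : (i:ℕ) - 1 < 2*n := by omega
    rw [Finset.sum_eq_single (⟨(i:ℕ)-1, h1⟩ : Fin (2*n))]
    · simp only [Jmat, of_apply, Fin.val_mk, and_true, Matrix.neg_apply, Matrix.one_apply,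
        Fin.ext_iff]
      split_ifs <;> first | (exfalso; omega) | norm_num
    · intro b _ hb
      rw [Ne, Fin.ext_iff] at hb
      simp only [Fin.val_mk, and_true] at hb
      simp only [Jmat, of_apply, Fin.val_mk, and_true]
      split_ifs <;> first | (exfalso; omega) | norm_num
    · simp

lemma myJ_conjTranspose : (Jmat n)ᴴ = -(Jmat n) := by
  have : (Jmat n)ᴴ = (Jmat n)ᵀ := by
    ext i j
    simp only [conjTranspose_apply, transpose_apply, Jmat, of_apply]
    split_ifs <;> simp
  rw [this, myJ_transpose]

lemma myJ_T_mul_J : (Jmat n)ᵀ * Jmat n = 1 := by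
  rw [myJ_transpose, Matrix.neg_mul, myJ_mul_J]; simp

lemma myJ_mulVec_J_mulVec (v : Fin (2*n) → ℂ) : Jmat n *ᵥ (Jmat n *ᵥ v) = -v := by
  rw [mulVec_mulVec, myJ_mul_J, Matrix.neg_mulVec, Matrix.one_mulVec]

lemma myJ_star_mulVec (v : Fin (2*n) → ℂ) : star (Jmat n *ᵥ v) = Jmat n *ᵥ star v := by
  rw [star_mulVec, ← mulVec_transpose, myJ_conjTranspose, Matrix.transpose_neg, myJ_transpose,
    neg_neg]

lemma myJ_vecMul (v : Fin (2*n) → ℂ) : v ᵥ* Jmat n = -(Jmat n *ᵥ v) := by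
  rw [← mulVec_transpose, myJ_transpose, Matrix.neg_mulVec]

end JL

section VV
variable {n : ℕ} (u v : Fin n → ℂ) (A : Matrix (Fin n) (Fin n) ℂ)

lemma vvm_mul : vecMulVec u v * A = vecMulVec u (v ᵥ* A) := by
  ext i j
  simp only [mul_apply, vecMulVec_apply, vecMul, dotProduct, Finset.mul_sum]
  exact Finset.sum_congr rfl fun k _ => by ring

lemma mul_vvm : A * vecMulVec u v = vecMulVec (A *ᵥ u) v := by
  ext i j
  simp only [mul_apply, vecMulVec_apply, mulVec, dotProduct, Finset.sum_mul]
  exact Finset.sum_congr rfl fun k _ => by ring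

lemma vvm_vvm (w z : Fin n → ℂ) :
    vecMulVec u v * vecMulVec w z = (v ⬝ᵥ w) • vecMulVec u z := by
  ext i j
  simp only [mul_apply, vecMulVec_apply, Matrix.smul_apply, dotProduct, smul_eq_mul, Finset.sum_mul]
  exact Finset.sum_congr rfl fun k _ => by ring

lemma vvm_transpose : (vecMulVec u v)ᵀ = vecMulVec v u := by
  ext i j
  simp [vecMulVec_apply, mul_comm]

lemma vvm_neg_left : vecMulVec (-u) v = -vecMulVec u v := by
  ext i j; simp [vecMulVec_apply]

lemma vvm_neg_right : vecMulVec u (-v) = -vecMulVec u v := by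
  ext i j; simp [vecMulVec_apply]

lemma smul_vvm (c : ℂ) : c • vecMulVec u v = vecMulVec (c • u) v := by
  ext i j; simp [vecMulVec_apply, mul_assoc]

end VV

theorem stmt13 {n : ℕ} (θ : ℝ) (x : Fin (2 * n) → ℂ) (hx : star x ⬝ᵥ x = 1) :
    star (jmap x) ⬝ᵥ jmap x = 1 ∧
    star x ⬝ᵥ jmap x = 0 ∧
    pseudoRot θ x * pseudoRot θ (jmap x) = pseudoRot θ (jmap x) * pseudoRot θ x ∧
    (pseudoRot θ x * pseudoRot θ (jmap x)).det = Complex.exp (2 * θ * Complex.I) ∧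
    ∀ y : Fin (2 * n) → ℂ,
      (pseudoRot θ x * pseudoRot θ (jmap x)) *ᵥ jmap y
        = jmap ((pseudoRot θ x * pseudoRot θ (jmap x))ᴴ *ᵥ y) := by
  set J := Jmat n with hJdef
  have hjm : ∀ v : Fin (2*n) → ℂ, jmap v = J *ᵥ star v := fun v => rfl
  have hsjx : star (jmap x) = J *ᵥ x := by rw [hjm, myJ_star_mulVec, star_star]
  -- unit norm of jmap x
  have part1 : star (jmap x) ⬝ᵥ jmap x = 1 := by
    rw [hsjx, hjm, dotProduct_mulVec, myJ_vecMul, myJ_mulVec_J_mulVec, neg_neg,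
      dotProduct_comm]
    exact hx
  -- orthogonality
  have part2 : star x ⬝ᵥ jmap x = 0 := by
    have h : star x ⬝ᵥ jmap x = -(star x ⬝ᵥ jmap x) := by
      conv_lhs => rw [hjm, dotProduct_mulVec, myJ_vecMul, neg_dotProduct,
        dotProduct_comm, ← hjm]
    have h2 : (2:ℂ) * (star x ⬝ᵥ jmap x) = 0 := by linear_combination h
    exact (mul_eq_zero.mp h2).resolve_left two_ne_zero
  have part2' : star (jmap x) ⬝ᵥ x = 0 := by
    rw [star_dotProduct, part2, star_zero]
  set s : ℂ := 1 - Complex.exp (θ * Complex.I) with hs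
  set P := vecMulVec x (star x) with hP
  set Q := vecMulVec (jmap x) (star (jmap x)) with hQ
  have hPQ : P * Q = 0 := by rw [hP, hQ, vvm_vvm, part2, zero_smul]
  have hQP : Q * P = 0 := by rw [hP, hQ, vvm_vvm, part2', zero_smul]
  have expand : ∀ U V : Matrix (Fin (2*n)) (Fin (2*n)) ℂ, U * V = 0 →
      (1 - s•U) * (1 - s•V) = 1 - s•U - s•V := by
    intro U V h
    simp only [mul_sub, sub_mul, mul_one, one_mul, Matrix.smul_mul, Matrix.mul_smul, h,
      smul_zero, sub_zero]
  have hA : pseudoRot θ x = 1 - s • P := rfl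
  have hB : pseudoRot θ (jmap x) = 1 - s • Q := rfl
  have comm : pseudoRot θ x * pseudoRot θ (jmap x)
      = pseudoRot θ (jmap x) * pseudoRot θ x := by
    rw [hA, hB, expand _ _ hPQ, expand _ _ hQP]
    abel
  -- determinant
  have det1 : ∀ (u : Fin (2*n) → ℂ), star u ⬝ᵥ u = 1 →
      (1 - s • vecMulVec u (star u)).det = Complex.exp (θ * Complex.I) := by
    intro u hu
    have e1 : 1 - s • vecMulVec u (star u)
        = 1 + replicateCol Unit ((-s) • u) * replicateRow Unit (star u) := by
      rw [← vecMulVec_eq, ← smul_vvm, neg_smul, ← sub_eq_add_neg]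
    rw [e1, det_one_add_replicateCol_mul_replicateRow, dotProduct_smul, hu]
    simp only [smul_eq_mul, mul_one, hs]
    ring
  have detpart : (pseudoRot θ x * pseudoRot θ (jmap x)).det
      = Complex.exp (2 * θ * Complex.I) := by
    rw [det_mul, hA, hB, hP, hQ, det1 x hx, det1 (jmap x) part1, ← Complex.exp_add]
    congr 1
    ring
  -- H-linearity
  have hPJ : P * J = -(vecMulVec x (jmap x)) := by
    rw [hP, vvm_mul, myJ_vecMul, ← hjm, vvm_neg_right]
  have hJQ : J * Qᵀ = -(vecMulVec x (jmap x)) := by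
    rw [hQ, vvm_transpose, mul_vvm, hsjx, myJ_mulVec_J_mulVec, vvm_neg_left]
  have hQJ : Q * J = vecMulVec (jmap x) x := by
    rw [hQ, vvm_mul, myJ_vecMul, hsjx, myJ_mulVec_J_mulVec, neg_neg]
  have hJP : J * Pᵀ = vecMulVec (jmap x) x := by
    rw [hP, vvm_transpose, mul_vvm, ← hjm]
  have hAJ : (1 - s•P) * J = J * (1 - s•Q)ᵀ := by
    rw [transpose_sub, transpose_one, transpose_smul, sub_mul, one_mul, mul_sub, mul_one,
      Matrix.smul_mul, Matrix.mul_smul, hPJ, hJQ]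
  have hBJ : (1 - s•Q) * J = J * (1 - s•P)ᵀ := by
    rw [transpose_sub, transpose_one, transpose_smul, sub_mul, one_mul, mul_sub, mul_one,
      Matrix.smul_mul, Matrix.mul_smul, hQJ, hJP]
  have hMJ : (pseudoRot θ x * pseudoRot θ (jmap x)) * J
      = J * (pseudoRot θ x * pseudoRot θ (jmap x))ᵀ := by
    rw [hA, hB, transpose_mul, mul_assoc, hBJ, ← mul_assoc, hAJ, mul_assoc]
  refine ⟨part1, part2, comm, detpart, fun y => ?_⟩
  rw [hjm y, mulVec_mulVec, hMJ, ← mulVec_mulVec,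
    hjm ((pseudoRot θ x * pseudoRot θ (jmap x))ᴴ *ᵥ y)]
  rw [star_mulVec, conjTranspose_conjTranspose, mulVec_transpose]
end

section
/- Let θ, θ', θ_1, θ_2 ∈ ℝ and let x, x', x_1, x_2 be unit vectors in ℂ^{2n}. If A_{(θ,x)}·A_{(θ',x')} = A_{(θ_1,x_1)}·A_{(θ_2,x_2)}, then A_{(θ',𝐣x')}·A_{(θ,𝐣x)} = A_{(θ_2,𝐣x_2)}·A_{(θ_1,𝐣x_1)}. -/
open Matrix Complex

namespace Stmt14Aux

variable {n : ℕ}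

/-- The index involution: `i ↦ i+1` for even `i`, `i ↦ i-1` for odd `i`. -/
def sig (n : ℕ) (i : Fin (2 * n)) : Fin (2 * n) :=
  ⟨if (i : ℕ) % 2 = 0 then (i : ℕ) + 1 else (i : ℕ) - 1, by
    have := i.isLt; split <;> omega⟩

/-- The sign `ε i = ±1`. -/
def eps (n : ℕ) (i : Fin (2 * n)) : ℂ :=
  if (i : ℕ) % 2 = 0 then 1 else -1

lemma sig_sig : Function.Involutive (sig n) := by
  intro i
  apply Fin.ext
  simp only [sig]
  split_ifs <;> omega

lemma eps_mul_self (i : Fin (2 * n)) : eps n i * eps n i = 1 := by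
  unfold eps; split_ifs <;> norm_num

lemma conj_eps (i : Fin (2 * n)) : (starRingEnd ℂ) (eps n i) = eps n i := by
  unfold eps; split_ifs <;> simp

lemma Jmat_apply (i k : Fin (2 * n)) :
    Jmat n i k = if k = sig n i then eps n i else 0 := by
  simp only [Jmat, sig, eps, Matrix.of_apply, Fin.ext_iff]
  split_ifs <;> first | rfl | omega | (exfalso; omega)

lemma jmap_apply (x : Fin (2 * n) → ℂ) (i : Fin (2 * n)) :
    jmap x i = eps n i * (starRingEnd ℂ) (x (sig n i)) := by
  simp only [jmap, Matrix.mulVec, dotProduct, Jmat_apply, Pi.star_apply, ite_mul,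
    zero_mul]
  rw [Finset.sum_ite_eq' Finset.univ (sig n i)]
  simp [Complex.star_def]

/-- The transform `T(B) i j = ε i ε j conj (B (σ i) (σ j))`. -/
def Tr (n : ℕ) (B : Matrix (Fin (2 * n)) (Fin (2 * n)) ℂ) :
    Matrix (Fin (2 * n)) (Fin (2 * n)) ℂ :=
  Matrix.of fun i j => eps n i * eps n j * (starRingEnd ℂ) (B (sig n i) (sig n j))

lemma Tr_mul (A B : Matrix (Fin (2 * n)) (Fin (2 * n)) ℂ) :
    Tr n (A * B) = Tr n A * Tr n B := by
  ext i j
  simp only [Tr, Matrix.of_apply, Matrix.mul_apply, map_sum, _root_.map_mul, Finset.mul_sum]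
  rw [← Equiv.sum_comp (Function.Involutive.toPerm (sig n) sig_sig)
      (fun k => eps n i * eps n j *
        ((starRingEnd ℂ) (A (sig n i) k) * (starRingEnd ℂ) (B k (sig n j))))]
  refine Finset.sum_congr rfl fun k _ => ?_
  simp only [Function.Involutive.coe_toPerm]
  have h := eps_mul_self (n := n) k
  linear_combination (-(eps n i * eps n j * (starRingEnd ℂ) (A (sig n i) (sig n k)) *
    (starRingEnd ℂ) (B (sig n k) (sig n j)))) * h

lemma Tr_one : Tr n 1 = 1 := by
  ext i j
  by_cases h : i = j
  · subst h
    simp [Tr, Matrix.one_apply, eps_mul_self]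
  · have h2 : sig n i ≠ sig n j := fun hc => h (sig_sig.injective hc)
    simp [Tr, Matrix.one_apply, h, h2]

lemma conj_exp (θ : ℝ) :
    (starRingEnd ℂ) (Complex.exp (θ * I)) = Complex.exp ((-θ : ℝ) * I) := by
  rw [← Complex.exp_conj]
  congr 1
  simp [Complex.conj_ofReal]

lemma Tr_pseudoRot (θ : ℝ) (x : Fin (2 * n) → ℂ) :
    Tr n (pseudoRot θ x) = pseudoRot (-θ) (jmap x) := by
  ext i j
  simp only [Tr, pseudoRot, Matrix.of_apply, Matrix.sub_apply, Matrix.smul_apply,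
    Matrix.vecMulVec_apply, Pi.star_apply, smul_eq_mul, map_sub, _root_.map_mul, _root_.map_one,
    Complex.star_def, MonoidWithZeroHom.map_ite_one_zero]
  rw [conj_exp, Complex.conj_conj]
  have hone : eps n i * eps n j *
      (starRingEnd ℂ) ((1 : Matrix (Fin (2*n)) (Fin (2*n)) ℂ) (sig n i) (sig n j))
      = (1 : Matrix (Fin (2*n)) (Fin (2*n)) ℂ) i j := by
    by_cases h : i = j
    · subst h; simp [Matrix.one_apply, eps_mul_self]
    · have h2 : sig n i ≠ sig n j := fun hc => h (sig_sig.injective hc)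
      simp [Matrix.one_apply, h, h2]
  rw [jmap_apply, jmap_apply]
  simp only [_root_.map_mul, conj_eps, Complex.conj_conj, Complex.star_def]
  rw [mul_sub, hone]
  ring

lemma pseudoRot_conjTranspose (θ : ℝ) (x : Fin (2 * n) → ℂ) :
    (pseudoRot θ x)ᴴ = pseudoRot (-θ) x := by
  ext i j
  simp only [pseudoRot, Matrix.conjTranspose_apply, Matrix.sub_apply, Matrix.smul_apply,
    Matrix.vecMulVec_apply, Pi.star_apply, smul_eq_mul, Matrix.one_apply, star_sub,
    star_mul', star_star, star_one, Complex.star_def]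
  rw [apply_ite (starRingEnd ℂ) (j = i) 1 0, _root_.map_one, _root_.map_zero, conj_exp,
    Complex.conj_conj]
  rw [show (if j = i then (1:ℂ) else 0) = (if i = j then (1:ℂ) else 0) by simp [eq_comm]]
  ring

end Stmt14Aux

theorem stmt14 {n : ℕ} (θ θ' θ₁ θ₂ : ℝ) (x x' x₁ x₂ : Fin (2 * n) → ℂ)
    (hx : star x ⬝ᵥ x = 1) (hx' : star x' ⬝ᵥ x' = 1)
    (hx₁ : star x₁ ⬝ᵥ x₁ = 1) (hx₂ : star x₂ ⬝ᵥ x₂ = 1)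
    (heq : pseudoRot θ x * pseudoRot θ' x' = pseudoRot θ₁ x₁ * pseudoRot θ₂ x₂) :
    pseudoRot θ' (jmap x') * pseudoRot θ (jmap x)
      = pseudoRot θ₂ (jmap x₂) * pseudoRot θ₁ (jmap x₁) := by
  have h2 : pseudoRot (-θ') x' * pseudoRot (-θ) x
      = pseudoRot (-θ₂) x₂ * pseudoRot (-θ₁) x₁ := by
    have h := congrArg Matrix.conjTranspose heq
    simpa only [Matrix.conjTranspose_mul, Stmt14Aux.pseudoRot_conjTranspose] using h
  have h3 := congrArg (Stmt14Aux.Tr n) h2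
  rw [Stmt14Aux.Tr_mul, Stmt14Aux.Tr_mul, Stmt14Aux.Tr_pseudoRot, Stmt14Aux.Tr_pseudoRot, Stmt14Aux.Tr_pseudoRot, Stmt14Aux.Tr_pseudoRot] at h3
  simpa only [neg_neg] using h3
end

section
/- Let L ⊆ ℂ^{2n} be an ℍ-line, i.e. a 2-dimensional complex subspace with 𝐣L = L, and suppose L ⊆ ℂ^{2m} but L ⊄ ℂ^{2m−1}. Then L ∩ ℂ^{2m−1} is a 1-dimensional complex subspace, and there is a unique unit vector x ∈ L ∩ ℂ^{2m−1} whose (2m−1)-st coordinate is real and positive; writing x = (x_1,…,x_{2m−1},0,…,0), one has 𝐣x = (x̄_2, −x̄_1, x̄_4, −x̄_3, …, x̄_{2m−2}, −x̄_{2m−3}, 0, −x_{2m−1}, 0, …, 0). -/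
open Matrix Complex

/-- The distinguished unit vector of an `ℍ`-line `L ⊆_min ℂ^{2m}`: it lies in
`L ∩ ℂ^{2m-1}`, is a unit vector, and its `(2m-1)`-st (1-based) coordinate is
real and positive. -/
def distinguishedVec {n : ℕ} (m : ℕ) (L : Submodule ℂ (Fin (2 * n) → ℂ))
    (x : Fin (2 * n) → ℂ) : Prop :=
  x ∈ L ∧ x ∈ stdSubspace (2 * n) (2 * m - 1) ∧ star x ⬝ᵥ x = 1 ∧
    ∀ i : Fin (2 * n), (i : ℕ) = 2 * m - 2 → (x i).im = 0 ∧ 0 < (x i).re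

lemma jmap_apply {n : ℕ} (x : Fin (2 * n) → ℂ) (i : Fin (2 * n)) :
    jmap x i = ∑ j, Jmat n i j * star (x j) := by
  simp [jmap, Matrix.mulVec, dotProduct]

lemma jmap_even {n : ℕ} (x : Fin (2 * n) → ℂ) (i j : Fin (2 * n))
    (hi : (i : ℕ) % 2 = 0) (hj : (j : ℕ) = (i : ℕ) + 1) :
    jmap x i = star (x j) := by
  rw [jmap_apply, Finset.sum_eq_single j]
  · have : Jmat n i j = 1 := by simp [Jmat, hi, hj]
    rw [this, one_mul]
  · intro k _ hk
    have : Jmat n i k = 0 := by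
      simp only [Jmat, Matrix.of_apply]
      rw [if_neg, if_neg]
      · rintro ⟨h1, h2⟩; omega
      · rintro ⟨h1, h2⟩
        exact hk (Fin.ext (by omega))
    rw [this, zero_mul]
  · intro h; exact absurd (Finset.mem_univ j) h

lemma jmap_odd {n : ℕ} (x : Fin (2 * n) → ℂ) (i j : Fin (2 * n))
    (hi : (i : ℕ) % 2 = 1) (hj : (i : ℕ) = (j : ℕ) + 1) :
    jmap x i = -star (x j) := by
  rw [jmap_apply, Finset.sum_eq_single j]
  · have : Jmat n i j = -1 := by
      simp only [Jmat, Matrix.of_apply]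
      rw [if_neg, if_pos]
      · exact ⟨by omega, hj⟩
      · rintro ⟨h1, h2⟩; omega
    rw [this]; ring
  · intro k _ hk
    have : Jmat n i k = 0 := by
      simp only [Jmat, Matrix.of_apply]
      rw [if_neg, if_neg]
      · rintro ⟨h1, h2⟩
        exact hk (Fin.ext (by omega))
      · rintro ⟨h1, h2⟩; omega
    rw [this, zero_mul]
  · intro h; exact absurd (Finset.mem_univ j) h

set_option maxHeartbeats 1000000 in
theorem stmt15 {n m : ℕ} (hm : 1 ≤ m) (hmn : m ≤ n)
    (L : Submodule ℂ (Fin (2 * n) → ℂ))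
    (hdim : Module.finrank ℂ ↥L = 2)
    (hjL : ∀ y ∈ L, jmap y ∈ L)
    (hsub : L ≤ stdSubspace (2 * n) (2 * m))
    (hnsub : ¬ L ≤ stdSubspace (2 * n) (2 * m - 1)) :
    Module.finrank ℂ ↥(L ⊓ stdSubspace (2 * n) (2 * m - 1)) = 1 ∧
    (∃! x : Fin (2 * n) → ℂ, distinguishedVec m L x) ∧
    ∀ x : Fin (2 * n) → ℂ, distinguishedVec m L x →
      (∀ i j : Fin (2 * n), (i : ℕ) + 1 < 2 * m - 1 → (i : ℕ) % 2 = 0 →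
        (j : ℕ) = (i : ℕ) + 1 → jmap x i = star (x j)) ∧
      (∀ i j : Fin (2 * n), (i : ℕ) < 2 * m - 1 → (j : ℕ) % 2 = 0 →
        (i : ℕ) = (j : ℕ) + 1 → jmap x i = -star (x j)) ∧
      (∀ i : Fin (2 * n), (i : ℕ) = 2 * m - 2 → jmap x i = 0) ∧
      (∀ i j : Fin (2 * n), (i : ℕ) = 2 * m - 1 → (j : ℕ) = 2 * m - 2 →
        jmap x i = -(x j)) ∧
      (∀ i : Fin (2 * n), 2 * m ≤ (i : ℕ) → jmap x i = 0) := by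
  have h1 : 2 * m - 1 < 2 * n := by omega
  have h0 : 2 * m - 2 < 2 * n := by omega
  set i₁ : Fin (2 * n) := ⟨2 * m - 1, h1⟩ with hi₁
  set i₀ : Fin (2 * n) := ⟨2 * m - 2, h0⟩ with hi₀
  obtain ⟨y, hyL, hyS⟩ := SetLike.not_le_iff_exists.mp hnsub
  have hy1 : y i₁ ≠ 0 := by
    by_contra h
    apply hyS
    intro i hi
    by_cases hcase : (i : ℕ) = 2 * m - 1
    · have : i = i₁ := Fin.ext hcase
      rw [this]; exact h
    · exact hsub hyL i (by omega)
  -- Part 1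
  have part1 : Module.finrank ℂ ↥(L ⊓ stdSubspace (2 * n) (2 * m - 1)) = 1 := by
    set φ : L →ₗ[ℂ] ℂ := (LinearMap.proj i₁ : (Fin (2 * n) → ℂ) →ₗ[ℂ] ℂ).comp L.subtype with hφ
    have hker : LinearMap.ker φ = (L ⊓ stdSubspace (2 * n) (2 * m - 1)).comap L.subtype := by
      ext ⟨u, hu⟩
      simp only [LinearMap.mem_ker, Submodule.mem_comap, Submodule.subtype_apply,
        Submodule.mem_inf, hφ, LinearMap.comp_apply, LinearMap.proj_apply]
      constructor
      · intro h
        refine ⟨hu, ?_⟩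
        intro i hi
        by_cases hcase : (i : ℕ) = 2 * m - 1
        · have : i = i₁ := Fin.ext hcase
          rw [this]; exact h
        · exact hsub hu i (by omega)
      · intro ⟨_, h⟩
        exact h i₁ (le_refl _)
    have hrange : Module.finrank ℂ ↥(LinearMap.range φ) = 1 := by
      have hle : Module.finrank ℂ ↥(LinearMap.range φ) ≤ 1 := by
        have := Submodule.finrank_le (LinearMap.range φ)
        simpa using this
      have hnt : Nontrivial ↥(LinearMap.range φ) := by
        refine ⟨⟨⟨y i₁, ⟨⟨y, hyL⟩, rfl⟩⟩, 0, ?_⟩⟩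
        intro h
        exact hy1 (by simpa using congrArg Subtype.val h)
      have hpos := Module.finrank_pos_iff (R := ℂ).mpr hnt
      omega
    have hrn := LinearMap.finrank_range_add_finrank_ker φ
    rw [hdim, hrange, hker] at hrn
    set_option synthInstance.maxHeartbeats 400000 in
    have heq : Module.finrank ℂ
        ↥((L ⊓ stdSubspace (2 * n) (2 * m - 1)).comap L.subtype) =
        Module.finrank ℂ ↥(L ⊓ stdSubspace (2 * n) (2 * m - 1)) :=
      (Submodule.comapSubtypeEquivOfLe
        (inf_le_left : L ⊓ stdSubspace (2 * n) (2 * m - 1) ≤ L)).finrank_eq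
    omega
  -- the special vector w
  set w : Fin (2 * n) → ℂ := (starRingEnd ℂ) (y i₀) • y + (y i₁) • jmap y with hw
  have hjy0 : jmap y i₀ = star (y i₁) :=
    jmap_even y i₀ i₁ (show (2 * m - 2) % 2 = 0 by omega)
      (show 2 * m - 1 = (2 * m - 2) + 1 by omega)
  have hjy1 : jmap y i₁ = -star (y i₀) :=
    jmap_odd y i₁ i₀ (show (2 * m - 1) % 2 = 1 by omega)
      (show 2 * m - 1 = (2 * m - 2) + 1 by omega)
  clear hnsub hyS
  set s : ℝ := Complex.normSq (y i₀) + Complex.normSq (y i₁) with hs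
  have hspos : 0 < s := by
    have := Complex.normSq_pos.mpr hy1
    have := Complex.normSq_nonneg (y i₀)
    rw [hs]; linarith
  have hw0 : w i₀ = (s : ℂ) := by
    simp only [hw, Pi.add_apply, Pi.smul_apply, smul_eq_mul, hjy0, Complex.star_def]
    rw [hs]
    push_cast
    rw [mul_comm ((starRingEnd ℂ) (y i₀)), Complex.mul_conj, Complex.mul_conj]
  have hw1 : w i₁ = 0 := by
    simp only [hw, Pi.add_apply, Pi.smul_apply, smul_eq_mul, hjy1, Complex.star_def]
    ring
  have hwL : w ∈ L := L.add_mem (L.smul_mem _ hyL) (L.smul_mem _ (hjL y hyL))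
  have hwS : w ∈ stdSubspace (2 * n) (2 * m - 1) := by
    intro i hi
    by_cases hcase : (i : ℕ) = 2 * m - 1
    · have : i = i₁ := Fin.ext hcase
      rw [this]; exact hw1
    · exact hsub hwL i (by omega)
  have hwK : w ∈ L ⊓ stdSubspace (2 * n) (2 * m - 1) := ⟨hwL, hwS⟩
  have hwne : w ≠ 0 := by
    intro h
    have h0' : (s : ℂ) = 0 := by rw [← hw0, h]; rfl
    exact hspos.ne' (by exact_mod_cast h0')
  -- K = span {w}
  have hKspan : L ⊓ stdSubspace (2 * n) (2 * m - 1) = Submodule.span ℂ {w} := by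
    symm
    apply Submodule.eq_of_le_of_finrank_le
    · rw [Submodule.span_le, Set.singleton_subset_iff]; exact hwK
    · rw [part1, finrank_span_singleton hwne]
  -- norm squared of w
  set r : ℝ := ∑ i, Complex.normSq (w i) with hr
  have hwdot : star w ⬝ᵥ w = (r : ℂ) := by
    simp only [dotProduct, Pi.star_apply, hr, Complex.star_def]
    push_cast
    exact Finset.sum_congr rfl fun i _ => by
      rw [mul_comm, Complex.mul_conj]
  have hrpos : 0 < r := by
    have h1 : Complex.normSq (w i₀) ≤ r := by
      rw [hr]
      exact Finset.single_le_sum (fun i _ => Complex.normSq_nonneg (w i)) (Finset.mem_univ i₀)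
    have h2 : 0 < Complex.normSq (w i₀) :=
      Complex.normSq_pos.mpr (by rw [hw0]; exact_mod_cast hspos.ne')
    linarith
  set c : ℝ := (Real.sqrt r)⁻¹ with hc
  have hcpos : 0 < c := by
    rw [hc]
    exact inv_pos.mpr (Real.sqrt_pos.mpr hrpos)
  have hsqrt : Real.sqrt r * Real.sqrt r = r := Real.mul_self_sqrt hrpos.le
  have hsne : Real.sqrt r ≠ 0 := (Real.sqrt_pos.mpr hrpos).ne'
  have hc2 : c * c * r = 1 := by
    rw [hc, ← hsqrt]
    field_simp
    rw [Real.sqrt_sq (Real.sqrt_nonneg r)]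
  -- dot product of scalar multiples of w
  have hdot : ∀ t : ℂ, star (t • w) ⬝ᵥ (t • w) = ((Complex.normSq t * r : ℝ) : ℂ) := by
    intro t
    rw [star_smul, smul_dotProduct, dotProduct_smul, hwdot]
    simp only [smul_eq_mul, Complex.star_def]
    push_cast
    rw [← mul_assoc, mul_comm ((starRingEnd ℂ) t) t, Complex.mul_conj]
  set x : Fin (2 * n) → ℂ := (c : ℂ) • w with hx
  have hxd : distinguishedVec m L x := by
    refine ⟨L.smul_mem _ hwL, Submodule.smul_mem _ _ hwS, ?_, ?_⟩
    · rw [hx, hdot, Complex.normSq_ofReal]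
      exact_mod_cast hc2
    · intro i hi
      have hii : i = i₀ := Fin.ext hi
      rw [hii, hx]
      simp only [Pi.smul_apply, smul_eq_mul, hw0]
      rw [← Complex.ofReal_mul]
      refine ⟨Complex.ofReal_im _, ?_⟩
      rw [Complex.ofReal_re]
      positivity
  -- uniqueness
  have huniq : ∀ x' : Fin (2 * n) → ℂ, distinguishedVec m L x' → x' = x := by
    intro x' ⟨hx'L, hx'S, hx'unit, hx'pos⟩
    have hx'K : x' ∈ Submodule.span ℂ {w} := by
      rw [← hKspan]; exact ⟨hx'L, hx'S⟩
    obtain ⟨t, ht⟩ := Submodule.mem_span_singleton.mp hx'K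
    obtain ⟨him, hre⟩ := hx'pos i₀ rfl
    have hti0 : x' i₀ = t * (s : ℂ) := by rw [← ht]; simp [hw0]
    have htim : t.im = 0 := by
      have : (t * (s:ℂ)).im = 0 := by rw [← hti0]; exact him
      simp [Complex.mul_im] at this
      rcases this with h | h
      · exact h
      · exact absurd h hspos.ne'
    have htre : 0 < t.re := by
      have h2 : 0 < (t * (s:ℂ)).re := by rw [← hti0]; exact hre
      simp [Complex.mul_re, htim] at h2
      nlinarith
    have htunit : Complex.normSq t * r = 1 := by
      have := hx'unit
      rw [← ht, hdot] at this
      exact_mod_cast this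
    have hns : Complex.normSq t = t.re * t.re := by
      rw [Complex.normSq_apply, htim]; ring
    have htunit' : t.re * t.re * r = 1 := by rw [← hns]; exact htunit
    have hkey : (t.re - c) * ((t.re + c) * r) = 0 := by linear_combination htunit' - hc2
    have htc : t.re = c := by
      rcases mul_eq_zero.mp hkey with h | h
      · linarith
      · exfalso; nlinarith
    have : t = (c : ℂ) := Complex.ext (by rw [htc]; simp) (by rw [htim]; simp)
    rw [← ht, this]
  refine ⟨part1, ⟨x, hxd, huniq⟩, ?_⟩
  -- Part 3
  intro z ⟨hzL, hzS, hzunit, hzpos⟩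
  refine ⟨?_, ?_, ?_, ?_, ?_⟩
  · intro i j _ hie hj
    exact jmap_even z i j hie hj
  · intro i j hi hje hij
    exact jmap_odd z i j (by omega) hij
  · intro i hi
    have hjx : (i : ℕ) + 1 < 2 * n := by omega
    have := jmap_even z i ⟨(i : ℕ) + 1, hjx⟩ (by omega) rfl
    rw [this, hzS ⟨(i : ℕ) + 1, hjx⟩ (show 2 * m - 1 ≤ (i : ℕ) + 1 by omega)]
    exact star_zero ℂ
  · intro i j hi hj
    have := jmap_odd z i j (by omega) (by omega)
    rw [this]
    obtain ⟨him, _⟩ := hzpos j hj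
    congr 1
    exact Complex.conj_eq_iff_im.mpr him
  · intro i hi
    have hilt := i.isLt
    rcases Nat.even_or_odd (i : ℕ) with he | ho
    · obtain ⟨k, hk⟩ := he
      have hjx : (i : ℕ) + 1 < 2 * n := by omega
      have := jmap_even z i ⟨(i : ℕ) + 1, hjx⟩ (by omega) rfl
      rw [this, hzS ⟨(i : ℕ) + 1, hjx⟩ (show 2 * m - 1 ≤ (i : ℕ) + 1 by omega)]
      exact star_zero ℂ
    · have hjx : (i : ℕ) - 1 < 2 * n := by omega
      have ho' : (i : ℕ) % 2 = 1 := Nat.odd_iff.mp ho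
      have := jmap_odd z i ⟨(i : ℕ) - 1, hjx⟩ ho' (show (i:ℕ) = ((i:ℕ) - 1) + 1 by omega)
      rw [this, hzS ⟨(i : ℕ) - 1, hjx⟩ (show 2 * m - 1 ≤ (i : ℕ) - 1 by omega)]
      simp
end
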